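/- arXiv:2512.08771 — 7 statements merged into one kernel-verified Lean document; each statement's English description precedes it below -/
import Mathlib

section
/- Let {x_j}_{j≥1} be a sequence of nonnegative real numbers such that the series ∑_{j=1}^∞ x_j converges with sum at most M for some M > 0. Then M · ∑_{j=1}^∞ (√x_j − √x_{j+1})² ≥ (x_1)²/4. -/
/-- If `{x_j}` is a sequence of nonnegative reals whose series is summable
with sum at most `M > 0`, then `M * ∑ (√x_j − √x_{j+1})² ≥ x_1² / 4`. -/
theorem stmt0 (M : ℝ) (hM : 0 < M) (x : ℕ → ℝ) (hx : ∀ j, 0 ≤ x j)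
    (hsum : Summable x) (hbound : ∑' j, x j ≤ M) :
    M * ∑' j, (Real.sqrt (x j) - Real.sqrt (x (j + 1))) ^ 2 ≥ (x 0) ^ 2 / 4 := by
  set a : ℕ → ℝ := fun j => Real.sqrt (x j) - Real.sqrt (x (j + 1)) with ha
  set b : ℕ → ℝ := fun j => Real.sqrt (x j) + Real.sqrt (x (j + 1)) with hb
  have hsum' : Summable (fun j => x (j + 1)) := (summable_nat_add_iff 1).2 hsum
  have hxM : ∑' j, x j ≤ M := hbound
  have h2sqrt : ∀ j, 2 * Real.sqrt (x j) * Real.sqrt (x (j + 1)) ≤ x j + x (j + 1) := by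
    intro j
    nlinarith [sq_nonneg (Real.sqrt (x j) - Real.sqrt (x (j+1))),
      Real.sq_sqrt (hx j), Real.sq_sqrt (hx (j+1))]
  have haSummable : Summable (fun j => a j ^ 2) := by
    refine Summable.of_nonneg_of_le (fun j => sq_nonneg _) ?_ (hsum.add hsum')
    intro j
    have := h2sqrt j
    simp only [ha]
    nlinarith [Real.sq_sqrt (hx j), Real.sq_sqrt (hx (j+1)),
      Real.sqrt_nonneg (x j), Real.sqrt_nonneg (x (j+1))]
  set S : ℝ := ∑' j, a j ^ 2 with hS
  have hSnonneg : 0 ≤ S := tsum_nonneg fun j => sq_nonneg _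
  -- bound on partial sums of b^2
  have hbB : ∀ N : ℕ, ∑ j ∈ Finset.range N, b j ^ 2 ≤ 4 * M := by
    intro N
    have hle : ∀ j, b j ^ 2 ≤ 2 * x j + 2 * x (j + 1) := by
      intro j
      have := h2sqrt j
      simp only [hb]
      nlinarith [Real.sq_sqrt (hx j), Real.sq_sqrt (hx (j+1))]
    calc ∑ j ∈ Finset.range N, b j ^ 2
        ≤ ∑ j ∈ Finset.range N, (2 * x j + 2 * x (j + 1)) :=
          Finset.sum_le_sum fun j _ => hle j
      _ = 2 * ∑ j ∈ Finset.range N, x j + 2 * ∑ j ∈ Finset.range N, x (j + 1) := by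
          rw [Finset.sum_add_distrib, Finset.mul_sum, Finset.mul_sum]
      _ ≤ 2 * M + 2 * M := by
          gcongr
          · exact le_trans (Summable.sum_le_tsum _ (fun j _ => hx j) hsum) hxM
          · refine le_trans (Summable.sum_le_tsum _ (fun j _ => hx _) hsum') ?_
            refine le_trans ?_ hxM
            exact Summable.tsum_le_tsum_of_inj (· + 1) (add_left_injective 1)
              (fun i _ => hx i) (fun j => le_refl _) hsum' hsum
      _ = 4 * M := by ring
  -- key partial inequality
  have key : ∀ N : ℕ, (x 0 - x N) ^ 2 ≤ S * (4 * M) := by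
    intro N
    have hab : ∀ j, a j * b j = x j - x (j + 1) := by
      intro j
      simp only [ha, hb]
      nlinarith [Real.sq_sqrt (hx j), Real.sq_sqrt (hx (j+1))]
    have htel : ∑ j ∈ Finset.range N, a j * b j = x 0 - x N := by
      simp only [hab]
      exact Finset.sum_range_sub' x N
    have hcs' : (∑ j ∈ Finset.range N, a j * b j) ^ 2 ≤
        (∑ j ∈ Finset.range N, a j ^ 2) * ∑ j ∈ Finset.range N, b j ^ 2 :=
      Finset.sum_mul_sq_le_sq_mul_sq (Finset.range N) a b
    rw [htel] at hcs'
    refine le_trans hcs' ?_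
    have h1 : ∑ j ∈ Finset.range N, a j ^ 2 ≤ S :=
      Summable.sum_le_tsum _ (fun j _ => sq_nonneg _) haSummable
    have h2 := hbB N
    have h3 : 0 ≤ ∑ j ∈ Finset.range N, a j ^ 2 :=
      Finset.sum_nonneg fun j _ => sq_nonneg _
    have h4 : 0 ≤ ∑ j ∈ Finset.range N, b j ^ 2 :=
      Finset.sum_nonneg fun j _ => sq_nonneg _
    exact mul_le_mul h1 h2 h4 hSnonneg
  -- take the limit N → ∞
  have hx0 : Filter.Tendsto (fun N => (x 0 - x N) ^ 2) Filter.atTop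
      (nhds ((x 0) ^ 2)) := by
    have h0 : Filter.Tendsto x Filter.atTop (nhds 0) := hsum.tendsto_atTop_zero
    have := ((tendsto_const_nhds (x := x 0) (f := Filter.atTop)).sub h0).pow 2
    simpa using this
  have hfin : (x 0) ^ 2 ≤ S * (4 * M) :=
    le_of_tendsto hx0 (Filter.Eventually.of_forall key)
  have : (x 0) ^ 2 / 4 ≤ M * S := by linarith
  exact this
end

section
/- For positive integers N and m with m ≤ N, the alternating sum ∑_{j=0}^{2m} C(2m, j) · C(2N − 2m, N − j) · (−1)^j, divided by C(2N, N), equals (−1)^m · C(N, m) / C(2N, 2m). Equivalently, C(2N, 2m) · ∑_{j=0}^{2m} C(2m, j) · C(2N−2m, N−j) · (−1)^j = (−1)^m · C(N, m) · C(2N, N). -/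
/-- `(l+1) * C(n, l+1) = (n - l) * C(n, l)` over `ℤ`. -/
lemma Z2 (n l : ℕ) : ((l : ℤ) + 1) * (n.choose (l+1)) = ((n : ℤ) - l) * (n.choose l) := by
  rcases le_or_gt l n with h | h
  · have := Nat.choose_succ_right_eq n l
    have h2 : ((n.choose (l+1) * (l+1) : ℕ) : ℤ) = ((n.choose l * (n - l) : ℕ) : ℤ) := by
      exact congrArg (fun x : ℕ => (x : ℤ)) this
    push_cast [h] at h2
    linarith
  · rw [Nat.choose_eq_zero_of_lt h, Nat.choose_eq_zero_of_lt (by omega)]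
    ring

/-- `(b + 1 - l) * C(b+1, l) = (b+1) * C(b, l)` over `ℤ`. -/
lemma Z1 (b l : ℕ) : ((b : ℤ) + 1 - l) * ((b+1).choose l) = ((b : ℤ) + 1) * (b.choose l) := by
  rcases le_or_gt l (b+1) with h | h
  · have := Nat.choose_mul_succ_eq b l
    have h2 : ((b.choose l * (b+1) : ℕ) : ℤ) = (((b+1).choose l * (b + 1 - l) : ℕ) : ℤ) := by
      exact congrArg (fun x : ℕ => (x : ℤ)) this
    push_cast [h] at h2
    linarith
  · rw [Nat.choose_eq_zero_of_lt h, Nat.choose_eq_zero_of_lt (by omega)]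
    ring

lemma pascalZ (n k : ℕ) : (((n+1).choose (k+1) : ℤ)) = (n.choose k : ℤ) + (n.choose (k+1) : ℤ) := by
  exact_mod_cast Nat.choose_succ_succ' n k

/-- interior per-term identity -/
lemma core (a b k l : ℕ) (hs : a + b = 2*(k+l) + 2) :
    ((b:ℤ)+1) * ((a+2).choose (k+1)) * (b.choose (l+1)) +
      ((a:ℤ)+1) * (a.choose (k+1)) * ((b+2).choose (l+1))
    = ((k:ℤ)+l+3) * (((a+1).choose (k+1) : ℤ) * ((b+1).choose l : ℤ) +
        ((a+1).choose k : ℤ) * ((b+1).choose (l+1) : ℤ)) := by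
  have hsZ : (a:ℤ) + b = 2*(k+l) + 2 := by exact_mod_cast hs
  have E1 := Z1 b (l+1)
  have E2 := Z1 a (k+1)
  have E3 := pascalZ (a+1) k
  have E4 := pascalZ (b+1) l
  have E5 := Z2 (a+1) k
  have E6 := Z2 (b+1) l
  push_cast at E1 E2 E5 E6
  linear_combination (-(((a+2).choose (k+1) : ℤ))) * E1 + (-(((b+2).choose (l+1) : ℤ))) * E2 +
    ((b:ℤ)-l) * (((b+1).choose (l+1) : ℤ)) * E3 + ((a:ℤ)-k) * (((a+1).choose (k+1) : ℤ)) * E4 +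
    (((b+1).choose (l+1) : ℤ)) * E5 + (((a+1).choose (k+1) : ℤ)) * E6 +
    ((((a+1).choose (k+1) : ℤ)) * (((b+1).choose (l+1) : ℤ))
      + (((a+1).choose k : ℤ)) * (((b+1).choose (l+1) : ℤ))
      + (((a+1).choose (k+1) : ℤ)) * (((b+1).choose l : ℤ))) * hsZ

lemma core0 (a b l : ℕ) (hs : a + b = 2*l) :
    ((b:ℤ)+1) * (b.choose (l+1)) + ((a:ℤ)+1) * ((b+2).choose (l+1))
      = ((l:ℤ)+2) * ((b+1).choose l) := by
  have hsZ : (a:ℤ) + b = 2*l := by exact_mod_cast hs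
  have E1 := Z1 b (l+1)
  have E4 := pascalZ (b+1) l
  have E6 := Z2 (b+1) l
  push_cast at E1 E6
  linear_combination (-1 : ℤ) * E1 + ((a:ℤ)+1) * E4 + E6 +
    ((((b+1).choose (l+1) : ℤ)) + (((b+1).choose l : ℤ))) * hsZ

lemma coreN (a b k : ℕ) (hs : a + b = 2*k) :
    ((b:ℤ)+1) * ((a+2).choose (k+1)) + ((a:ℤ)+1) * (a.choose (k+1))
      = ((k:ℤ)+2) * ((a+1).choose k) := by
  have hsZ : (a:ℤ) + b = 2*k := by exact_mod_cast hs
  have E2 := Z1 a (k+1)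
  have E3 := pascalZ (a+1) k
  have E5 := Z2 (a+1) k
  push_cast at E2 E5
  linear_combination (-1 : ℤ) * E2 + ((b:ℤ)+1) * E3 + E5 +
    ((((a+1).choose (k+1) : ℤ)) + (((a+1).choose k : ℤ))) * hsZ

def SS (N m : ℕ) : ℤ :=
  ∑ j ∈ Finset.range (2*N+1),
    ((2*m).choose j : ℤ) * (if j ≤ N then ((2*N-2*m).choose (N-j) : ℤ) else 0) * (-1)^j

def gg (m d j : ℕ) : ℤ :=
  if 1 ≤ j ∧ j ≤ m+d+1 then
    ((m:ℤ)+d+2) * (-1)^j * ((2*m+1).choose (j-1) : ℤ) * ((2*d+1).choose (m+d+1-j) : ℤ)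
  else 0

lemma perterm (m d j : ℕ) :
    (2*(d:ℤ)+1) * ((2*m+2).choose j : ℤ) *
        (if j ≤ m+d+1 then ((2*d).choose (m+d+1-j) : ℤ) else 0) * (-1)^j
      + (2*(m:ℤ)+1) * ((2*m).choose j : ℤ) *
        (if j ≤ m+d+1 then ((2*d+2).choose (m+d+1-j) : ℤ) else 0) * (-1)^j
    = gg m d j - gg m d (j+1) := by
  rcases Nat.lt_or_ge (m+d+1) j with hj | hj
  · -- j > N : everything vanishes
    rw [if_neg (by omega), if_neg (by omega)]
    rw [gg, if_neg (by omega), gg, if_neg (by omega)]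
    ring
  rcases Nat.eq_zero_or_pos j with rfl | hj1
  · -- j = 0
    rw [if_pos (by omega), if_pos (by omega)]
    rw [gg, if_neg (by omega), gg, if_pos (by omega)]
    have h := core0 (2*m) (2*d) (m+d) (by omega)
    push_cast at h ⊢
    simp only [Nat.choose_zero_right, Nat.cast_one]
    linear_combination h
  rcases Nat.eq_or_lt_of_le hj with rfl | hjN
  · -- j = N
    rw [if_pos (by omega), if_pos (by omega)]
    rw [gg, if_pos (by omega), gg, if_neg (by omega)]
    have h := coreN (2*m) (2*d) (m+d) (by omega)
    have e1 : m+d+1-(m+d+1) = 0 := by omega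
    have e2 : m+d+1-1 = m+d := by omega
    have e3 : m+d+1 = (m+d)+1 := by omega
    rw [e1, e2]
    rw [show (2*m+2).choose (m+d+1) = (2*m+2).choose ((m+d)+1) from by rw [← e3],
        show (2*m).choose (m+d+1) = (2*m).choose ((m+d)+1) from by rw [← e3]]
    push_cast at h ⊢
    have sgn : ((-1:ℤ))^(m+d+1) = (-1)^(m+d+1) := rfl
    simp only [Nat.choose_zero_right, Nat.cast_one]
    linear_combination ((-1:ℤ))^(m+d+1) * h
  · -- 1 ≤ j ≤ N-1
    obtain ⟨i, rfl⟩ : ∃ i, j = i + 1 := ⟨j-1, by omega⟩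
    obtain ⟨l, hl⟩ : ∃ l, m+d+1-(i+1) = l + 1 := ⟨m+d-i-1, by omega⟩
    rw [if_pos (by omega), if_pos (by omega)]
    rw [gg, if_pos (by omega), gg, if_pos (by omega)]
    have h := core (2*m) (2*d) i l (by omega)
    have e2 : m+d+1-(i+1+1) = l := by omega
    have e3 : i+1-1 = i := by omega
    have e4 : i+1+1-1 = i+1 := by omega
    rw [hl, e2, e3, e4]
    have eN : ((m:ℤ)+d+2) = (i:ℤ)+l+3 := by
      have : m+d+1 = i+1+l+1 := by omega
      have := congrArg (fun x : ℕ => (x:ℤ)) this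
      push_cast at this; linarith
    rw [eN]
    push_cast at h ⊢
    have sgn : ((-1:ℤ))^(i+1+1) = (-1)^(i+1) * (-1) := by ring
    rw [sgn]
    linear_combination ((-1:ℤ))^(i+1) * h

lemma recur (m d : ℕ) :
    (2*(d:ℤ)+1) * SS (m+d+1) (m+1) + (2*(m:ℤ)+1) * SS (m+d+1) m = 0 := by
  have h1 : 2*(m+d+1) - 2*(m+1) = 2*d := by omega
  have h2 : 2*(m+d+1) - 2*m = 2*d+2 := by omega
  have h3 : 2*(m+1) = 2*m+2 := by omega
  have h1' : 2*(m+d+1) - (2*m+2) = 2*d := by omega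
  rw [SS, SS]
  simp only [h1, h2, h3, h1']
  rw [Finset.mul_sum, Finset.mul_sum, ← Finset.sum_add_distrib]
  have key : ∀ j ∈ Finset.range (2*(m+d+1)+1),
      (2*(d:ℤ)+1) * (((2*m+2).choose j : ℤ) *
          (if j ≤ m+d+1 then ((2*d).choose (m+d+1-j) : ℤ) else 0) * (-1)^j)
        + (2*(m:ℤ)+1) * (((2*m).choose j : ℤ) *
          (if j ≤ m+d+1 then ((2*d+2).choose (m+d+1-j) : ℤ) else 0) * (-1)^j)
      = gg m d j - gg m d (j+1) := fun j _ => by linear_combination perterm m d j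
  rw [Finset.sum_congr rfl key, Finset.sum_range_sub']
  rw [gg, if_neg (by omega), gg, if_neg (by omega)]
  ring

lemma keyK (m d : ℕ) :
    ((2*(m+d+1)).choose (2*m+2) : ℤ) * (2*(m:ℤ)+1) * ((m+d+1).choose m : ℤ)
      = ((m+d+1).choose (m+1) : ℤ) * (2*(d:ℤ)+1) * ((2*(m+d+1)).choose (2*m) : ℤ) := by
  have hc : ((2*(m:ℤ)+2)*((m:ℤ)+1)) ≠ 0 := by positivity
  apply mul_left_cancel₀ hc
  have e1 := Z2 (2*(m+d+1)) (2*m+1)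
  have e2 := Z2 (2*(m+d+1)) (2*m)
  have e3 := Z2 (m+d+1) m
  push_cast at e1 e2 e3
  linear_combination ((m:ℤ)+1)*(2*(m:ℤ)+1)*((m+d+1).choose m : ℤ) * e1
    + (2*(d:ℤ)+1)*((m:ℤ)+1)*((m+d+1).choose m : ℤ) * e2
    - (2*(m:ℤ)+2)*(2*(d:ℤ)+1)*((2*(m+d+1)).choose (2*m) : ℤ) * e3

lemma aux (N : ℕ) : ∀ m, m ≤ N →
    ((2*N).choose (2*m) : ℤ) * SS N m
      = (-1)^m * (N.choose m : ℤ) * ((2*N).choose N : ℤ) := by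
  intro m
  induction m with
  | zero =>
    intro _
    rw [SS]
    rw [Finset.sum_eq_single 0]
    · simp
    · intro j _ hj
      rw [Nat.choose_eq_zero_of_lt (by omega : (2*0:ℕ) < j)]
      push_cast; ring
    · intro h; exact absurd (Finset.mem_range.2 (by omega)) h
  | succ m ih =>
    intro hm1
    have ihm := ih (by omega)
    obtain ⟨d, rfl⟩ : ∃ d, N = m + d + 1 := ⟨N-m-1, by omega⟩
    have R := recur m d
    have K := keyK m d
    have hc : ((2*(d:ℤ)+1) * ((2*(m+d+1)).choose (2*m) : ℤ)) ≠ 0 := by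
      have : 0 < (2*(m+d+1)).choose (2*m) := Nat.choose_pos (by omega)
      positivity
    apply mul_left_cancel₀ hc
    have e : 2*(m+1) = 2*m+2 := by omega
    rw [e]
    push_cast at ihm R K ⊢
    linear_combination (((2*(m+d+1)).choose (2*m) : ℤ) * ((2*(m+d+1)).choose (2*m+2) : ℤ)) * R
      - (2*(m:ℤ)+1) * ((2*(m+d+1)).choose (2*m+2) : ℤ) * ihm
      - (-1:ℤ)^m * ((2*(m+d+1)).choose (m+d+1) : ℤ) * K

/-- For positive integers `N, m` with `m ≤ N`,
`C(2N,2m) * ∑_{j=0}^{2m} C(2m,j) C(2N−2m, N−j) (−1)^j = (−1)^m C(N,m) C(2N,N)`,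
with the convention that the binomial coefficient vanishes outside its range. -/
theorem stmt1 (N m : ℕ) (hN : 0 < N) (hm : 0 < m) (hmN : m ≤ N) :
    ((2 * N).choose (2 * m) : ℤ) *
      ∑ j ∈ Finset.range (2 * m + 1),
        ((2 * m).choose j : ℤ) *
          (if j ≤ N then ((2 * N - 2 * m).choose (N - j) : ℤ) else 0) * (-1) ^ j
      = (-1) ^ m * (N.choose m : ℤ) * ((2 * N).choose N : ℤ) := by
  have hsum : ∑ j ∈ Finset.range (2 * m + 1),
        ((2 * m).choose j : ℤ) *
          (if j ≤ N then ((2 * N - 2 * m).choose (N - j) : ℤ) else 0) * (-1) ^ j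
      = SS N m := by
    rw [SS]
    apply Finset.sum_subset
    · exact Finset.range_subset_range.2 (by omega)
    · intro j _ hj
      rw [Finset.mem_range, not_lt] at hj
      rw [Nat.choose_eq_zero_of_lt (by omega : 2*m < j)]
      push_cast; ring
  rw [hsum]
  exact aux N m hmN
end

section
/- Let p be an odd prime and let ω be a primitive p-th root of unity in the complex numbers. For each residue k modulo p, let a_k denote the number of p-element subsets of {1, 2, ..., 2p} whose element sum is congruent to k modulo p. Then a_0 − 2 = a_1 = a_2 = ... = a_{p−1}, and consequently a_0 = (C(2p, p) − 2)/p + 2 and a_k = (C(2p, p) − 2)/p for k ≠ 0. In particular |a_k − C(2p,p)/p| ≤ 2 for all k. -/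
open Finset

namespace Stmt3Aux

/-- Shift the first block `{1,…,p}` cyclically by `t`, fix everything else. -/
def shf (p t x : ℕ) : ℕ := if x ≤ p then (x - 1 + t) % p + 1 else x

lemma shf_mem_Icc {p : ℕ} (hp : 0 < p) (t : ℕ) {x : ℕ} (hx : x ∈ Icc 1 (2 * p)) :
    shf p t x ∈ Icc 1 (2 * p) := by
  simp only [mem_Icc] at hx ⊢
  unfold shf
  split
  · have := Nat.mod_lt (x - 1 + t) hp
    omega
  · omega

lemma shf_le_iff {p : ℕ} (hp : 0 < p) (t : ℕ) {x : ℕ} :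
    shf p t x ≤ p ↔ x ≤ p := by
  unfold shf
  split
  · have := Nat.mod_lt (x - 1 + t) hp
    omega
  · omega

lemma shf_injOn {p : ℕ} (hp : 0 < p) (t : ℕ) :
    Set.InjOn (shf p t) (Icc 1 (2 * p) : Finset ℕ) := by
  intro x hx y hy h
  simp only [coe_Icc, Set.mem_Icc] at hx hy
  unfold shf at h
  by_cases hxp : x ≤ p <;> by_cases hyp : y ≤ p <;>
    simp only [if_pos, if_neg, hxp, hyp, if_true, if_false] at h
  · have hmod : (x - 1 + t) % p = (y - 1 + t) % p := by omega
    have h1 : (x - 1 + t) ≡ (y - 1 + t) [MOD p] := hmod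
    have h2 : (x - 1) ≡ (y - 1) [MOD p] := h1.add_right_cancel' t
    have h3 : (x - 1) % p = (y - 1) % p := h2
    rw [Nat.mod_eq_of_lt (by omega), Nat.mod_eq_of_lt (by omega)] at h3
    omega
  · have := Nat.mod_lt (x - 1 + t) hp; omega
  · have := Nat.mod_lt (y - 1 + t) hp; omega
  · exact h

lemma shf_cast {p : ℕ} (t : ℕ) {x : ℕ} (h1 : 1 ≤ x) (h2 : x ≤ p) :
    ((shf p t x : ℕ) : ZMod p) = (x : ZMod p) + t := by
  unfold shf
  rw [if_pos h2]
  push_cast [ZMod.natCast_mod, Nat.cast_sub h1]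
  ring

lemma shf_shf {p : ℕ} (hp : 0 < p) {t t' : ℕ} (ht : (t + t') % p = 0) {x : ℕ}
    (hx : x ∈ Icc 1 (2 * p)) : shf p t' (shf p t x) = x := by
  simp only [mem_Icc] at hx
  by_cases hxp : x ≤ p
  · have h2 : (x - 1 + t) % p < p := Nat.mod_lt _ hp
    have h1 : shf p t x = (x - 1 + t) % p + 1 := if_pos hxp
    rw [h1]
    unfold shf
    rw [if_pos (by omega)]
    obtain ⟨c, hc⟩ := Nat.dvd_of_mod_eq_zero ht
    have key : ((x - 1 + t) % p + 1 - 1 + t') % p = x - 1 := by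
      rw [Nat.add_sub_cancel, Nat.mod_add_mod]
      have : x - 1 + t + t' = x - 1 + p * c := by omega
      rw [this, Nat.add_mul_mod_self_left, Nat.mod_eq_of_lt (by omega)]
    rw [key]
    omega
  · unfold shf
    rw [if_neg hxp, if_neg hxp]

/-- The image of a subset under the shift. -/
def shS (p t : ℕ) (S : Finset ℕ) : Finset ℕ := S.image (shf p t)

lemma shS_card {p : ℕ} (hp : 0 < p) (t : ℕ) {S : Finset ℕ} (hS : S ⊆ Icc 1 (2 * p)) :
    (shS p t S).card = S.card :=
  Finset.card_image_of_injOn ((shf_injOn hp t).mono (by exact_mod_cast hS))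

lemma shS_subset {p : ℕ} (hp : 0 < p) (t : ℕ) {S : Finset ℕ} (hS : S ⊆ Icc 1 (2 * p)) :
    shS p t S ⊆ Icc 1 (2 * p) := by
  intro y hy
  obtain ⟨x, hx, rfl⟩ := Finset.mem_image.mp hy
  exact shf_mem_Icc hp t (hS hx)

lemma shS_filter {p : ℕ} (hp : 0 < p) (t : ℕ) {S : Finset ℕ} (hS : S ⊆ Icc 1 (2 * p)) :
    ((shS p t S).filter (fun x => x ≤ p)).card = (S.filter (fun x => x ≤ p)).card := by
  unfold shS
  rw [Finset.filter_image]
  have h1 : (S.filter fun a => shf p t a ≤ p) = S.filter (fun x => x ≤ p) :=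
    Finset.filter_congr (fun x _ => by simp [shf_le_iff hp t])
  rw [h1]
  exact Finset.card_image_of_injOn (((shf_injOn hp t).mono
    (by exact_mod_cast (Finset.filter_subset _ S).trans hS)))

lemma shS_sum {p : ℕ} (hp : 0 < p) (t : ℕ) {S : Finset ℕ} (hS : S ⊆ Icc 1 (2 * p)) :
    (((shS p t S).sum id : ℕ) : ZMod p)
      = ((S.sum id : ℕ) : ZMod p) + (t : ZMod p) * (S.filter (fun x => x ≤ p)).card := by
  unfold shS
  rw [Finset.sum_image (fun x hx y hy h =>
    shf_injOn hp t (by exact_mod_cast hS hx) (by exact_mod_cast hS hy) h)]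
  rw [Nat.cast_sum, Nat.cast_sum]
  simp only [id]
  rw [← Finset.sum_filter_add_sum_filter_not S (fun x => x ≤ p) (fun x => ((shf p t x : ℕ) : ZMod p))]
  rw [← Finset.sum_filter_add_sum_filter_not S (fun x => x ≤ p) (fun x => (x : ZMod p))]
  have h1 : ∑ x ∈ S.filter (fun x => x ≤ p), ((shf p t x : ℕ) : ZMod p)
      = ∑ x ∈ S.filter (fun x => x ≤ p), ((x : ZMod p) + t) := by
    refine Finset.sum_congr rfl (fun x hx => ?_)
    have hx' := Finset.mem_filter.mp hx
    have := Finset.mem_Icc.mp (hS hx'.1)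
    exact shf_cast t this.1 hx'.2
  have h2 : ∑ x ∈ S.filter (fun x => ¬ x ≤ p), ((shf p t x : ℕ) : ZMod p)
      = ∑ x ∈ S.filter (fun x => ¬ x ≤ p), (x : ZMod p) := by
    refine Finset.sum_congr rfl (fun x hx => ?_)
    have hx' := Finset.mem_filter.mp hx
    unfold shf
    rw [if_neg hx'.2]
  rw [h1, h2, Finset.sum_add_distrib, Finset.sum_const, nsmul_eq_mul]
  ring

lemma gauss (n : ℕ) : 2 * (∑ x ∈ Icc 1 n, x) = n * (n + 1) := by
  induction n with
  | zero => simp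
  | succ n ih =>
    rw [Finset.sum_Icc_succ_top (by omega)]
    nlinarith [ih]

lemma two_ne_zero' {p : ℕ} (hp : p.Prime) (hodd : Odd p) : (2 : ZMod p) ≠ 0 := by
  haveI : Fact p.Prime := ⟨hp⟩
  intro h
  have h2 : ((2 : ℕ) : ZMod p) = 0 := by exact_mod_cast h
  have := (ZMod.natCast_eq_zero_iff 2 p).mp h2
  have hp2 := (Nat.prime_dvd_prime_iff_eq hp Nat.prime_two).mp this
  have := Nat.odd_iff.mp hodd
  omega

lemma sum_s1_zero {p : ℕ} (hp : p.Prime) (hodd : Odd p) :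
    (((Icc 1 p).sum id : ℕ) : ZMod p) = 0 := by
  haveI : Fact p.Prime := ⟨hp⟩
  have h2 : (2 : ZMod p) * (((Icc 1 p).sum id : ℕ) : ZMod p) = 0 := by
    have : ((2 * ∑ x ∈ Icc 1 p, x : ℕ) : ZMod p) = ((p * (p + 1) : ℕ) : ZMod p) := by
      rw [gauss]
    push_cast at this
    simpa [id, ZMod.natCast_self] using this
  rcases mul_eq_zero.mp h2 with h | h
  · exact absurd h (two_ne_zero' hp hodd)
  · exact h

lemma sum_s2_zero {p : ℕ} (hp : p.Prime) (hodd : Odd p) :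
    (((Icc (p + 1) (2 * p)).sum id : ℕ) : ZMod p) = 0 := by
  haveI : Fact p.Prime := ⟨hp⟩
  have hsplit : (Icc 1 p).sum id + (Icc (p + 1) (2 * p)).sum id = (Icc 1 (2 * p)).sum id := by
    rw [show Icc 1 p = Ioc 0 p by ext x; simp; omega,
      show Icc (p+1) (2*p) = Ioc p (2*p) by ext x; simp,
      show Icc 1 (2*p) = Ioc 0 (2*p) by ext x; simp; omega]
    exact Finset.sum_Ioc_consecutive id (by omega) (by omega)
  have htot : (((Icc 1 (2 * p)).sum id : ℕ) : ZMod p) = 0 := by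
    have h2 : (2 : ZMod p) * (((Icc 1 (2*p)).sum id : ℕ) : ZMod p) = 0 := by
      have : ((2 * ∑ x ∈ Icc 1 (2*p), x : ℕ) : ZMod p) = ((2*p * (2*p + 1) : ℕ) : ZMod p) := by
        rw [gauss]
      push_cast at this
      simpa [id, ZMod.natCast_self] using this
    rcases mul_eq_zero.mp h2 with h | h
    · exact absurd h (two_ne_zero' hp hodd)
    · exact h
  have hc : (((Icc 1 p).sum id + (Icc (p+1) (2*p)).sum id : ℕ) : ZMod p)
      = (((Icc 1 (2*p)).sum id : ℕ) : ZMod p) := by rw [hsplit]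
  rw [Nat.cast_add, sum_s1_zero hp hodd, htot] at hc
  simpa using hc

lemma filter_card_pos {p : ℕ} (hp0 : 0 < p) {S : Finset ℕ} (hsub : S ⊆ Icc 1 (2 * p))
    (hcard : S.card = p) (hne : S ≠ Icc (p + 1) (2 * p)) :
    0 < (S.filter (fun x => x ≤ p)).card := by
  rcases Nat.eq_zero_or_pos (S.filter (fun x => x ≤ p)).card with h | h
  · exfalso
    apply hne
    have hempty := Finset.card_eq_zero.mp h
    have hsub2 : S ⊆ Icc (p + 1) (2 * p) := by
      intro x hx
      have hx1 := Finset.mem_Icc.mp (hsub hx)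
      have hnle : ¬ x ≤ p := by
        intro hle
        have : x ∈ S.filter (fun x => x ≤ p) := Finset.mem_filter.mpr ⟨hx, hle⟩
        simp [hempty] at this
      exact Finset.mem_Icc.mpr ⟨by omega, hx1.2⟩
    exact Finset.eq_of_subset_of_card_le hsub2 (by rw [Nat.card_Icc]; omega)
  · exact h

lemma filter_card_lt {p : ℕ} (hp0 : 0 < p) {S : Finset ℕ} (hsub : S ⊆ Icc 1 (2 * p))
    (hcard : S.card = p) (hne : S ≠ Icc 1 p) :
    (S.filter (fun x => x ≤ p)).card < p := by
  have hle : (S.filter (fun x => x ≤ p)).card ≤ p :=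
    le_trans (Finset.card_le_card (Finset.filter_subset _ _)) hcard.le
  rcases lt_or_eq_of_le hle with h | h
  · exact h
  exfalso
  apply hne
  have hsub1 : S.filter (fun x => x ≤ p) ⊆ Icc 1 p := by
    intro x hx
    have hx' := Finset.mem_filter.mp hx
    have := Finset.mem_Icc.mp (hsub hx'.1)
    exact Finset.mem_Icc.mpr ⟨this.1, hx'.2⟩
  have heq1 : S.filter (fun x => x ≤ p) = Icc 1 p :=
    Finset.eq_of_subset_of_card_le hsub1 (by rw [Nat.card_Icc]; omega)
  have heq2 : S.filter (fun x => x ≤ p) = S :=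
    Finset.eq_of_subset_of_card_le (Finset.filter_subset (fun x => x ≤ p) S) (by omega)
  rw [heq1] at heq2
  exact heq2.symm

/-- For `S` in class `k ≠ 0`, the filter-cardinality `m` is invertible mod `p`, used below. -/
lemma key {p : ℕ} (hp : p.Prime) (hodd : Odd p) (k : ZMod p) (hk : k ≠ 0) :
    (((Icc 1 (2 * p)).powersetCard p).filter
        (fun S => ((S.sum id : ℕ) : ZMod p) = k)).card + 2
      = (((Icc 1 (2 * p)).powersetCard p).filter
        (fun S => ((S.sum id : ℕ) : ZMod p) = 0)).card := by
  haveI : Fact p.Prime := ⟨hp⟩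
  have hp0 : 0 < p := hp.pos
  set A : ZMod p → Finset (Finset ℕ) := fun c => ((Icc 1 (2 * p)).powersetCard p).filter
    (fun S => ((S.sum id : ℕ) : ZMod p) = c) with hA
  show (A k).card + 2 = (A 0).card
  set s1 : Finset ℕ := Icc 1 p with hs1
  set s2 : Finset ℕ := Icc (p + 1) (2 * p) with hs2
  -- membership facts for special sets
  have hs1mem : s1 ∈ A 0 := by
    rw [hA]
    refine Finset.mem_filter.mpr ⟨Finset.mem_powersetCard.mpr ⟨?_, ?_⟩, sum_s1_zero hp hodd⟩
    · exact Finset.Icc_subset_Icc_right (by omega)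
    · rw [Nat.card_Icc]; omega
  have hs2mem : s2 ∈ A 0 := by
    rw [hA]
    refine Finset.mem_filter.mpr ⟨Finset.mem_powersetCard.mpr ⟨?_, ?_⟩, sum_s2_zero hp hodd⟩
    · exact Finset.Icc_subset_Icc (by omega) (le_refl _)
    · rw [Nat.card_Icc]; omega
  have hs1s2 : s1 ≠ s2 := by
    intro h
    have h1 : (1 : ℕ) ∈ s1 := Finset.mem_Icc.mpr ⟨le_refl _, hp0⟩
    rw [h] at h1
    have := Finset.mem_Icc.mp h1
    omega
  -- basic facts about members of classes
  have hmemA : ∀ c : ZMod p, ∀ S ∈ A c, S ⊆ Icc 1 (2 * p) ∧ S.card = p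
      ∧ ((S.sum id : ℕ) : ZMod p) = c := by
    intro c S hS
    obtain ⟨h1, h2⟩ := Finset.mem_filter.mp hS
    obtain ⟨h3, h4⟩ := Finset.mem_powersetCard.mp h1
    exact ⟨h3, h4, h2⟩
  -- m is nonzero mod p for sets distinct from s1, s2
  have hmval : ∀ S : Finset ℕ, S ⊆ Icc 1 (2 * p) → S.card = p → S ≠ s1 → S ≠ s2 →
      0 < (S.filter (fun x => x ≤ p)).card ∧ (S.filter (fun x => x ≤ p)).card < p := by
    intro S h1 h2 h3 h4
    exact ⟨filter_card_pos hp0 h1 h2 h4, filter_card_lt hp0 h1 h2 h3⟩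
  have hcastm : ∀ m : ℕ, 0 < m → m < p → ((m : ZMod p) ≠ 0) := by
    intro m h1 h2 h
    have := (ZMod.natCast_eq_zero_iff m p).mp h
    have := Nat.le_of_dvd h1 this
    omega
  -- sets in class k are distinct from s1 and s2
  have hne12 : ∀ S ∈ A k, S ≠ s1 ∧ S ≠ s2 := by
    intro S hS
    obtain ⟨_, _, hsum⟩ := hmemA k S hS
    constructor
    · rintro rfl
      rw [sum_s1_zero hp hodd] at hsum; exact hk hsum.symm
    · rintro rfl
      rw [sum_s2_zero hp hodd] at hsum; exact hk hsum.symm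
  -- em of special sets
  have hem_s1 : (s1.filter (fun x => x ≤ p)).card = p := by
    rw [Finset.filter_true_of_mem (fun x hx => (Finset.mem_Icc.mp hx).2), Nat.card_Icc]
    omega
  have hem_s2 : (s2.filter (fun x => x ≤ p)).card = 0 := by
    rw [Finset.filter_false_of_mem (fun x hx => by
      have := Finset.mem_Icc.mp hx; omega)]
    simp
  -- the value of the natCast of the val
  have hval : ∀ u : ZMod p, ((u.val : ℕ) : ZMod p) = u := by
    intro u; simp [ZMod.natCast_val, ZMod.cast_id]
  -- generic: shifting S (with invertible m) from class c to class c' is well-behaved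
  -- the main bijection
  have hbij : (A k).card = (((A 0).erase s1).erase s2).card := by
    apply Finset.card_bij'
      (i := fun S _ => shS p ((-k * ((S.filter (fun x => x ≤ p)).card : ZMod p)⁻¹).val) S)
      (j := fun S _ => shS p ((k * ((S.filter (fun x => x ≤ p)).card : ZMod p)⁻¹).val) S)
    -- hi : maps into ((A 0).erase s1).erase s2
    · intro S hS
      obtain ⟨hsub, hcard, hsum⟩ := hmemA k S hS
      obtain ⟨hne1, hne2⟩ := hne12 S hS
      obtain ⟨hm1, hm2⟩ := hmval S hsub hcard hne1 hne2
      set m : ℕ := (S.filter (fun x => x ≤ p)).card with hm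
      have hmz : (m : ZMod p) ≠ 0 := hcastm m hm1 hm2
      set t : ℕ := (-k * (m : ZMod p)⁻¹).val with ht
      have hfilt : ((shS p t S).filter (fun x => x ≤ p)).card = m := shS_filter hp0 t hsub
      have hsum' : (((shS p t S).sum id : ℕ) : ZMod p) = 0 := by
        rw [shS_sum hp0 t hsub, hsum, ht, hval, ← hm]
        field_simp
        ring
      refine Finset.mem_erase.mpr ⟨?_, Finset.mem_erase.mpr ⟨?_, ?_⟩⟩
      · intro h
        rw [h, hem_s2] at hfilt; omega
      · intro h
        rw [h, hem_s1] at hfilt; omega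
      · rw [hA]
        refine Finset.mem_filter.mpr ⟨Finset.mem_powersetCard.mpr
          ⟨shS_subset hp0 t hsub, by rw [shS_card hp0 t hsub, hcard]⟩, hsum'⟩
    -- hj : maps back into A k
    · intro S hS
      have hS' : S ∈ A 0 := Finset.mem_of_mem_erase (Finset.mem_of_mem_erase hS)
      have hne2 : S ≠ s2 := Finset.ne_of_mem_erase hS
      have hne1 : S ≠ s1 := Finset.ne_of_mem_erase (Finset.mem_of_mem_erase hS)
      obtain ⟨hsub, hcard, hsum⟩ := hmemA 0 S hS'
      obtain ⟨hm1, hm2⟩ := hmval S hsub hcard hne1 hne2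
      set m : ℕ := (S.filter (fun x => x ≤ p)).card with hm
      have hmz : (m : ZMod p) ≠ 0 := hcastm m hm1 hm2
      set t : ℕ := (k * (m : ZMod p)⁻¹).val with ht
      have hsum' : (((shS p t S).sum id : ℕ) : ZMod p) = k := by
        rw [shS_sum hp0 t hsub, hsum, ht, hval, ← hm]
        field_simp
        ring
      rw [hA]
      refine Finset.mem_filter.mpr ⟨Finset.mem_powersetCard.mpr
        ⟨shS_subset hp0 t hsub, by rw [shS_card hp0 t hsub, hcard]⟩, hsum'⟩
    -- left inverse
    · intro S hS
      obtain ⟨hsub, hcard, hsum⟩ := hmemA k S hS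
      obtain ⟨hne1, hne2⟩ := hne12 S hS
      obtain ⟨hm1, hm2⟩ := hmval S hsub hcard hne1 hne2
      set m : ℕ := (S.filter (fun x => x ≤ p)).card with hm
      have hmz : (m : ZMod p) ≠ 0 := hcastm m hm1 hm2
      set t : ℕ := (-k * (m : ZMod p)⁻¹).val with ht
      have hfilt : ((shS p t S).filter (fun x => x ≤ p)).card = m := shS_filter hp0 t hsub
      rw [hfilt]
      set t' : ℕ := (k * (m : ZMod p)⁻¹).val with ht'
      have hmod : (t + t') % p = 0 := by
        have : ((t + t' : ℕ) : ZMod p) = 0 := by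
          push_cast [ht, ht', hval]
          ring
        have := (ZMod.natCast_eq_zero_iff _ p).mp this
        omega
      unfold shS
      rw [Finset.image_image]
      rw [show S.image (shf p t' ∘ shf p t) = S.image id from
        Finset.image_congr (fun x hx => shf_shf hp0 hmod (hsub hx))]
      exact Finset.image_id
    -- right inverse
    · intro S hS
      have hS' : S ∈ A 0 := Finset.mem_of_mem_erase (Finset.mem_of_mem_erase hS)
      have hne2 : S ≠ s2 := Finset.ne_of_mem_erase hS
      have hne1 : S ≠ s1 := Finset.ne_of_mem_erase (Finset.mem_of_mem_erase hS)
      obtain ⟨hsub, hcard, hsum⟩ := hmemA 0 S hS'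
      obtain ⟨hm1, hm2⟩ := hmval S hsub hcard hne1 hne2
      set m : ℕ := (S.filter (fun x => x ≤ p)).card with hm
      have hmz : (m : ZMod p) ≠ 0 := hcastm m hm1 hm2
      set t : ℕ := (k * (m : ZMod p)⁻¹).val with ht
      have hfilt : ((shS p t S).filter (fun x => x ≤ p)).card = m := shS_filter hp0 t hsub
      rw [hfilt]
      set t' : ℕ := (-k * (m : ZMod p)⁻¹).val with ht'
      have hmod : (t + t') % p = 0 := by
        have : ((t + t' : ℕ) : ZMod p) = 0 := by
          push_cast [ht, ht', hval]
          ring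
        have := (ZMod.natCast_eq_zero_iff _ p).mp this
        omega
      unfold shS
      rw [Finset.image_image]
      rw [show S.image (shf p t' ∘ shf p t) = S.image id from
        Finset.image_congr (fun x hx => shf_shf hp0 hmod (hsub hx))]
      exact Finset.image_id
  -- count the two erased elements
  have h2mem : s2 ∈ (A 0).erase s1 := Finset.mem_erase.mpr ⟨hs1s2.symm, hs2mem⟩
  rw [hbij, Finset.card_erase_of_mem h2mem, Finset.card_erase_of_mem hs1mem]
  have : 2 ≤ (A 0).card := by
    have : ({s1, s2} : Finset (Finset ℕ)) ⊆ A 0 := by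
      intro x hx
      rcases Finset.mem_insert.mp hx with rfl | hx
      · exact hs1mem
      · rw [Finset.mem_singleton.mp hx]; exact hs2mem
    have h := Finset.card_le_card this
    rw [Finset.card_pair hs1s2] at h
    exact h
  omega

end Stmt3Aux

/-- For `p` an odd prime, let `a k` be the number of `p`-element subsets of
`{1,…,2p}` whose sum is `≡ k (mod p)`. Then `a 0 − 2 = a k` for all `k ≠ 0`, with the
explicit values `a 0 = (C(2p,p) − 2)/p + 2`, `a k = (C(2p,p) − 2)/p` for `k ≠ 0`, and in
particular `|a k − C(2p,p)/p| ≤ 2` for all `k`. -/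
theorem stmt3 (p : ℕ) (hp : p.Prime) (hodd : Odd p) (a : ZMod p → ℕ)
    (ha : ∀ k, a k =
      (((Finset.Icc 1 (2 * p)).powersetCard p).filter
        (fun S => ((S.sum id : ℕ) : ZMod p) = k)).card) :
    (∀ k : ZMod p, k ≠ 0 → a k + 2 = a 0) ∧
    ((a 0 : ℝ) = (((2 * p).choose p : ℝ) - 2) / p + 2) ∧
    (∀ k : ZMod p, k ≠ 0 → (a k : ℝ) = (((2 * p).choose p : ℝ) - 2) / p) ∧
    (∀ k : ZMod p, |(a k : ℝ) - ((2 * p).choose p : ℝ) / p| ≤ 2) := by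
  haveI : Fact p.Prime := ⟨hp⟩
  have hp0 : 0 < p := hp.pos
  have h1 : ∀ k : ZMod p, k ≠ 0 → a k + 2 = a 0 := by
    intro k hk
    rw [ha k, ha 0]
    exact Stmt3Aux.key hp hodd k hk
  have htot : ∑ k : ZMod p, a k = (2 * p).choose p := by
    have hcard : ((Finset.Icc 1 (2 * p)).powersetCard p).card = (2 * p).choose p := by
      rw [Finset.card_powersetCard, Nat.card_Icc]
      congr 1
    rw [← hcard]
    rw [Finset.card_eq_sum_card_fiberwise (f := fun S => ((S.sum id : ℕ) : ZMod p))
      (t := Finset.univ) (fun x _ => Finset.mem_univ _)]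
    exact Finset.sum_congr rfl (fun k _ => ha k)
  have hcardu : Fintype.card (ZMod p) = p := ZMod.card p
  have hcerase : (Finset.univ.erase (0 : ZMod p)).card = p - 1 := by
    rw [Finset.card_erase_of_mem (Finset.mem_univ 0), Finset.card_univ, hcardu]
  have hsum : ∑ k : ZMod p, a k = a 0 + ∑ k ∈ Finset.univ.erase 0, a k :=
    (Finset.add_sum_erase _ _ (Finset.mem_univ 0)).symm
  have herase : (∑ k ∈ Finset.univ.erase (0 : ZMod p), a k) + 2 * (p - 1) = (p - 1) * a 0 := by
    have e1 : ∑ k ∈ Finset.univ.erase (0 : ZMod p), (a k + 2) = (p - 1) * a 0 := by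
      rw [Finset.sum_congr rfl (fun k hk => h1 k (Finset.ne_of_mem_erase hk)),
        Finset.sum_const, hcerase, smul_eq_mul]
    rw [← e1, Finset.sum_add_distrib, Finset.sum_const, hcerase, smul_eq_mul, mul_comm]
  have hkey : p * a 0 = (2 * p).choose p + 2 * (p - 1) := by
    have e2 : p * a 0 = (p - 1) * a 0 + a 0 := by
      obtain ⟨q, rfl⟩ : ∃ q, p = q + 1 := ⟨p - 1, by omega⟩
      simp [Nat.add_sub_cancel, Nat.succ_mul]
    rw [e2, ← herase]
    omega
  -- real version
  have hpR : (0 : ℝ) < p := by exact_mod_cast hp0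
  have hpne : (p : ℝ) ≠ 0 := ne_of_gt hpR
  have hreal : (p : ℝ) * a 0 = ((2 * p).choose p : ℝ) + 2 * ((p : ℝ) - 1) := by
    have h' : ((p * a 0 : ℕ) : ℝ) = (((2 * p).choose p + 2 * (p - 1) : ℕ) : ℝ) := by rw [hkey]
    rw [Nat.cast_add, Nat.cast_mul, Nat.cast_mul, Nat.cast_sub (by omega : 1 ≤ p)] at h'
    push_cast at h'
    linarith [h']
  have ha0 : (a 0 : ℝ) = (((2 * p).choose p : ℝ) - 2) / p + 2 := by
    field_simp
    linarith [hreal]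
  have hak : ∀ k : ZMod p, k ≠ 0 → (a k : ℝ) = (((2 * p).choose p : ℝ) - 2) / p := by
    intro k hk
    have := congrArg (fun n : ℕ => (n : ℝ)) (h1 k hk)
    push_cast at this
    linarith [this, ha0]
  refine ⟨h1, ha0, hak, ?_⟩
  intro k
  have h2div : 2 / (p : ℝ) ≤ 2 := by
    rw [div_le_iff₀ hpR]
    nlinarith [hpR, show (1 : ℝ) ≤ p by exact_mod_cast hp0]
  have h2nn : (0 : ℝ) ≤ 2 / p := by positivity
  have hid : (((2 * p).choose p : ℝ) - 2) / p - ((2 * p).choose p : ℝ) / p = -(2 / p) := by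
    ring
  by_cases hk : k = 0
  · subst hk
    rw [ha0, abs_le]
    constructor <;> linarith
  · rw [hak k hk, abs_le]
    constructor <;> linarith
end

section
/- Let p be an odd prime and for each residue m modulo p let b_m denote the number of (p−1)-element subsets of {3, 4, ..., 2p} whose element sum is congruent to m modulo p. Then b_0 = b_1 = ... = b_{p−1} = C(2p−2, p−1)/p. In particular p divides C(2p−2, p−1). -/
/-!
The numbers `3, …, p + 2` form a complete residue system mod `p`, and a `(p - 1)`-subset `S`
of `{3, …, 2p}` meets this block in `k` elements with `1 ≤ k ≤ p - 1`, since the rest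
`{p + 3, …, 2p}` has only `p - 2` elements. Rotating the block cyclically by `t` (mod `p`) and
applying the rotation to `S` adds `k t` to the sum of `S` mod `p` and keeps `k`. As `k` is a unit
mod `p`, taking `t = (m' - m) / k` injects the subsets with sum `≡ m` into those with sum `≡ m'`,
so all `p` classes have the same size, namely `C(2p - 2, p - 1) / p`.
-/

open Finset

namespace BlockRotation

variable {p : ℕ} [NeZero p] (a : ℕ)

def rotFun (c : ZMod p) (x : ℕ) : ℕ :=
  if x ∈ Ico a (a + p) then a + (((x - a : ℕ) : ZMod p) + c).val else x

lemma rotFun_mem_iff (c : ZMod p) (x : ℕ) :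
    rotFun a c x ∈ Ico a (a + p) ↔ x ∈ Ico a (a + p) := by
  unfold rotFun
  split_ifs with h
  · simp only [h, iff_true, mem_Ico]
    have := ZMod.val_lt (((x - a : ℕ) : ZMod p) + c)
    omega
  · rfl

lemma rotFun_neg_rotFun (c : ZMod p) (x : ℕ) : rotFun a (-c) (rotFun a c x) = x := by
  by_cases h : x ∈ Ico a (a + p)
  · rw [rotFun, if_pos ((rotFun_mem_iff a c x).2 h), rotFun, if_pos h]
    rw [mem_Ico] at h
    rw [Nat.add_sub_cancel_left, ZMod.natCast_zmod_val, add_neg_cancel_right,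
      ZMod.val_natCast, Nat.mod_eq_of_lt (by omega)]
    omega
  · simp only [rotFun, if_neg h]

def rot (c : ZMod p) : Equiv.Perm ℕ where
  toFun := rotFun a c
  invFun := rotFun a (-c)
  left_inv := rotFun_neg_rotFun a c
  right_inv x := by simpa using rotFun_neg_rotFun a (-c) x

lemma rot_mem_iff (c : ZMod p) (x : ℕ) : rot a c x ∈ Ico a (a + p) ↔ x ∈ Ico a (a + p) :=
  rotFun_mem_iff a c x

lemma cast_rot (c : ZMod p) (x : ℕ) :
    ((rot a c x : ℕ) : ZMod p) = x + if x ∈ Ico a (a + p) then c else 0 := by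
  change ((rotFun a c x : ℕ) : ZMod p) = _
  rw [rotFun]
  split_ifs with h
  · rw [mem_Ico] at h
    push_cast [ZMod.natCast_zmod_val, Nat.cast_sub h.1]
    ring
  · simp

lemma rot_mem_of_subset {A : Finset ℕ} (hA : Ico a (a + p) ⊆ A) (c : ZMod p) {x : ℕ}
    (hx : x ∈ A) : rot a c x ∈ A := by
  by_cases h : x ∈ Ico a (a + p)
  · exact hA ((rot_mem_iff a c x).2 h)
  · change rotFun a c x ∈ A
    rwa [rotFun, if_neg h]

lemma card_filter_map_rot (c : ZMod p) (S : Finset ℕ) :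
    #{x ∈ S.map (rot a c).toEmbedding | x ∈ Ico a (a + p)} = #{x ∈ S | x ∈ Ico a (a + p)} := by
  rw [filter_map, card_map]
  simp only [Function.comp_def, Equiv.coe_toEmbedding, rot_mem_iff]

lemma cast_sum_map_rot (c : ZMod p) (S : Finset ℕ) :
    (((S.map (rot a c).toEmbedding).sum id : ℕ) : ZMod p) =
      (S.sum id : ℕ) + #{x ∈ S | x ∈ Ico a (a + p)} * c := by
  simp only [sum_map, Nat.cast_sum, id, Equiv.coe_toEmbedding, cast_rot, sum_add_distrib,
    ← sum_filter, sum_const, nsmul_eq_mul]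

variable [Fact p.Prime]

lemma card_filter_sum_le {F : Finset (Finset ℕ)}
    (hF : ∀ S ∈ F, ∀ c : ZMod p, S.map (rot a c).toEmbedding ∈ F)
    (hk : ∀ S ∈ F, (#{x ∈ S | x ∈ Ico a (a + p)} : ZMod p) ≠ 0) (m m' : ZMod p) :
    #{S ∈ F | ((S.sum id : ℕ) : ZMod p) = m} ≤ #{S ∈ F | ((S.sum id : ℕ) : ZMod p) = m'} := by
  set k : Finset ℕ → ZMod p := fun S => #{x ∈ S | x ∈ Ico a (a + p)}
  let shift : Finset ℕ → Finset ℕ := fun S => S.map (rot a ((m' - m) / k S)).toEmbedding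
  have hk_shift (S : Finset ℕ) : k (shift S) = k S := by
    simp only [k, shift, card_filter_map_rot]
  refine card_le_card_of_injOn shift (fun S hS => ?_) (fun S hS T hT hST => ?_)
  · simp only [coe_filter, Set.mem_ofPred_eq] at hS ⊢
    refine ⟨hF S hS.1 _, ?_⟩
    rw [cast_sum_map_rot, hS.2, mul_div_cancel₀ _ (hk S hS.1)]
    ring
  · have hkST : k S = k T := by rw [← hk_shift S, ← hk_shift T, hST]
    simp only [shift, hkST] at hST
    exact map_injective _ hST
end BlockRotation

lemma card_filter_mul_eq_card_of_forall_eq {ι : Type*} {p : ℕ} [NeZero p] (s : Finset ι)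
    (f : ι → ZMod p) (h : ∀ m m', #{x ∈ s | f x = m} = #{x ∈ s | f x = m'}) (m : ZMod p) :
    #{x ∈ s | f x = m} * p = #s := by
  classical
  rw [card_eq_sum_card_fiberwise (s := s) (t := univ) (fun x _ => mem_univ (f x)),
    sum_congr rfl fun m' _ => h m' m, sum_const, card_univ, ZMod.card, smul_eq_mul, mul_comm]

lemma pos_card_filter_Ico_of_mem_powersetCard {p : ℕ} (hp : 2 ≤ p) {S : Finset ℕ}
    (hS : S ∈ (Icc 3 (2 * p)).powersetCard (p - 1)) : 0 < #{x ∈ S | x ∈ Ico 3 (3 + p)} := by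
  rw [mem_powersetCard] at hS
  have h_rest : #{x ∈ S | x ∉ Ico 3 (3 + p)} ≤ #(Icc (p + 3) (2 * p)) := by
    refine card_le_card fun x hx => ?_
    rw [mem_filter] at hx
    have := hS.1 hx.1
    simp only [mem_Icc, mem_Ico] at this hx ⊢
    omega
  have := card_filter_add_card_filter_not (s := S) (fun x => x ∈ Ico 3 (3 + p))
  rw [Nat.card_Icc] at h_rest
  omega

lemma cast_card_filter_Ico_ne_zero {p : ℕ} (hp : 2 ≤ p) {S : Finset ℕ}
    (hS : S ∈ (Icc 3 (2 * p)).powersetCard (p - 1)) :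
    (#{x ∈ S | x ∈ Ico 3 (3 + p)} : ZMod p) ≠ 0 := by
  have hpos := pos_card_filter_Ico_of_mem_powersetCard hp hS
  have hlt : #{x ∈ S | x ∈ Ico 3 (3 + p)} < p :=
    (card_filter_le _ _).trans_lt ((mem_powersetCard.1 hS).2 ▸ by omega)
  rw [Ne, ZMod.natCast_eq_zero_iff]
  exact fun hdvd => absurd (Nat.le_of_dvd hpos hdvd) (by omega)

lemma map_rot_mem_powersetCard {p : ℕ} [NeZero p] (hp : 2 ≤ p) {S : Finset ℕ}
    (hS : S ∈ (Icc 3 (2 * p)).powersetCard (p - 1)) (c : ZMod p) :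
    S.map (BlockRotation.rot 3 c).toEmbedding ∈ (Icc 3 (2 * p)).powersetCard (p - 1) := by
  rw [mem_powersetCard] at hS ⊢
  refine ⟨fun y hy => ?_, by rw [card_map, hS.2]⟩
  obtain ⟨x, hx, rfl⟩ := mem_map.1 hy
  refine BlockRotation.rot_mem_of_subset 3 (fun z hz => ?_) c (hS.1 hx)
  simp only [mem_Icc, mem_Ico] at hz ⊢
  omega

theorem stmt6_general (p : ℕ) (hp : p.Prime) (b : ZMod p → ℕ)
    (hb : ∀ m, b m =
      (((Finset.Icc 3 (2 * p)).powersetCard (p - 1)).filter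
        (fun S => ((S.sum id : ℕ) : ZMod p) = m)).card) :
    (∀ m k : ZMod p, b m = b k) ∧
    (∀ m : ZMod p, b m * p = (2 * p - 2).choose (p - 1)) ∧
    p ∣ (2 * p - 2).choose (p - 1) := by
  have : Fact p.Prime := ⟨hp⟩
  set F := (Icc 3 (2 * p)).powersetCard (p - 1)
  have hF : ∀ S ∈ F, ∀ c : ZMod p, S.map (BlockRotation.rot 3 c).toEmbedding ∈ F :=
    fun S hS c => map_rot_mem_powersetCard hp.two_le hS c
  have hk : ∀ S ∈ F, (#{x ∈ S | x ∈ Ico 3 (3 + p)} : ZMod p) ≠ 0 :=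
    fun S hS => cast_card_filter_Ico_ne_zero hp.two_le hS
  have hconst : ∀ m k : ZMod p, b m = b k := fun m k => by
    rw [hb, hb]
    exact le_antisymm (BlockRotation.card_filter_sum_le 3 hF hk m k)
      (BlockRotation.card_filter_sum_le 3 hF hk k m)
  have hcard : #F = (2 * p - 2).choose (p - 1) := by
    rw [card_powersetCard, Nat.card_Icc, show 2 * p + 1 - 3 = 2 * p - 2 by omega]
  have hmul : ∀ m, b m * p = (2 * p - 2).choose (p - 1) := fun m => by
    rw [← hcard, hb]
    exact card_filter_mul_eq_card_of_forall_eq F _ (fun m k => by rw [← hb, ← hb, hconst]) m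
  exact ⟨hconst, hmul, Dvd.intro_left _ (hmul 0)⟩

/-- For `p` an odd prime, let `b m` be the number of `(p−1)`-element subsets
of `{3,…,2p}` whose sum is `≡ m (mod p)`. Then all the `b m` are equal, each equals
`C(2p−2, p−1)/p`, and in particular `p ∣ C(2p−2, p−1)`. -/
theorem stmt6 (p : ℕ) (hp : p.Prime) (hodd : Odd p) (b : ZMod p → ℕ)
    (hb : ∀ m, b m =
      (((Finset.Icc 3 (2 * p)).powersetCard (p - 1)).filter
        (fun S => ((S.sum id : ℕ) : ZMod p) = m)).card) :
    (∀ m k : ZMod p, b m = b k) ∧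
    (∀ m : ZMod p, b m * p = (2 * p - 2).choose (p - 1)) ∧
    p ∣ (2 * p - 2).choose (p - 1) :=
  stmt6_general p hp b hb
end

section
/- Let p be an odd prime, N = 2p, and for each k ∈ {1, 3, 5, ..., N−1} odd, let α_k denote the number of sequences ξ ∈ {−1, 1}^N with ∑_{i=1}^N ξ_i = 0 and ∑_{i=1}^N i·ξ_i ≡ k (mod N). Then |α_k − C(2p, p)/p| ≤ 2 for every such k. -/
open Finset Polynomial


-- helper: sum of ±1 weighted
lemma sum_mul_pm {n : ℕ} (w : Fin n → ℤ) (ξ : Fin n → ℤ)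
    (h : ∀ i, ξ i = 1 ∨ ξ i = -1) :
    ∑ i, w i * ξ i = ∑ i, w i - 2 * ∑ i ∈ univ.filter (fun i => ξ i = -1), w i := by
  classical
  rw [← Finset.sum_filter_add_sum_filter_not univ (fun i => ξ i = -1) (fun i => w i * ξ i),
      ← Finset.sum_filter_add_sum_filter_not univ (fun i => ξ i = -1) w]
  have h1 : ∑ i ∈ univ.filter (fun i => ξ i = -1), w i * ξ i
      = - ∑ i ∈ univ.filter (fun i => ξ i = -1), w i := by
    rw [← Finset.sum_neg_distrib]
    refine Finset.sum_congr rfl fun i hi => ?_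
    rw [mem_filter] at hi; rw [hi.2]; ring
  have h2 : ∑ i ∈ univ.filter (fun i => ¬ ξ i = -1), w i * ξ i
      = ∑ i ∈ univ.filter (fun i => ¬ ξ i = -1), w i := by
    refine Finset.sum_congr rfl fun i hi => ?_
    rw [mem_filter] at hi
    rcases h i with h' | h'
    · rw [h']; ring
    · exact absurd h' hi.2
  rw [h1, h2]; ring


-- product identity
lemma prod_identity {p : ℕ} (hp : p.Prime) (hodd : Odd p) {ζ : ℂ}
    (hζ : IsPrimitiveRoot ζ p) :
    ∏ i : Fin (2 * p), (X + C (ζ ^ (i.val + 1))) = (X ^ p + 1) ^ 2 := by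
  have hpos : 0 < p := hp.pos
  have hζp : ζ ^ p = 1 := hζ.pow_eq_one
  have base : (X ^ p + 1 : ℂ[X]) = ∏ i ∈ range p, (X + C (ζ ^ i)) := by
    have e : ((-1 : ℂ)) ^ p = -1 := hodd.neg_one_pow
    have := X_pow_sub_C_eq_prod hζ hpos e
    simp only [map_neg, map_one, sub_neg_eq_add] at this
    rw [this]
    refine Finset.prod_congr rfl fun i _ => ?_
    rw [mul_neg_one, map_neg, sub_neg_eq_add]
  have step1 : ∏ i ∈ range p, (X + C (ζ ^ (i + 1))) = ∏ i ∈ range p, (X + C (ζ ^ i)) := by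
    have hf0 : (X + C (ζ ^ p) : ℂ[X]) = X + C (ζ ^ 0) := by rw [hζp, pow_zero]
    have h1 := Finset.prod_range_succ (fun i => (X + C (ζ ^ i) : ℂ[X])) p
    have h2 := Finset.prod_range_succ' (fun i => (X + C (ζ ^ i) : ℂ[X])) p
    have hne : (X + C (ζ ^ 0) : ℂ[X]) ≠ 0 := by
      intro h
      have := congrArg (fun q : ℂ[X] => q.coeff 1) h
      simp [Polynomial.coeff_one] at this
    apply mul_right_cancel₀ hne
    rw [← h2]
    rw [h1, hf0]
  calc ∏ i : Fin (2 * p), (X + C (ζ ^ (i.val + 1)))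
      = ∏ i ∈ range (2 * p), (X + C (ζ ^ (i + 1))) := by
        rw [Fin.prod_univ_eq_prod_range (fun i => (X + C (ζ ^ (i + 1)) : ℂ[X]))]
    _ = (∏ i ∈ range p, (X + C (ζ ^ (i + 1)))) * ∏ i ∈ range p, (X + C (ζ ^ (p + i + 1))) := by
        rw [two_mul, Finset.prod_range_add]
    _ = (∏ i ∈ range p, (X + C (ζ ^ (i + 1)))) ^ 2 := by
        rw [sq]; congr 1
        refine Finset.prod_congr rfl fun i _ => ?_
        congr 2
        rw [show p + i + 1 = p + (i + 1) by ring, pow_add, hζp, one_mul]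
    _ = (X ^ p + 1) ^ 2 := by rw [step1, ← base]

lemma key (p : ℕ) (hp : p.Prime) (hodd : Odd p) :
    ∃ c : ℕ, p * c + 2 = (2 * p).choose p ∧
      ∀ r : ZMod p,
        ((Finset.powersetCard p (univ : Finset (Fin (2 * p)))).filter
          (fun t => ((∑ i ∈ t, (i.val + 1) : ℕ) : ZMod p) = r)).card
        = if r = 0 then c + 2 else c := by
  classical
  haveI : Fact p.Prime := ⟨hp⟩
  haveI : NeZero p := ⟨hp.pos.ne'⟩
  obtain ⟨ζ, hζ⟩ : ∃ ζ : ℂ, IsPrimitiveRoot ζ p :=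
    ⟨_, Complex.isPrimitiveRoot_exp p hp.pos.ne'⟩
  set F : Finset (Finset (Fin (2 * p))) := Finset.powersetCard p univ with hF
  set f : ZMod p → ℕ := fun r =>
    (F.filter (fun t => ((∑ i ∈ t, (i.val + 1) : ℕ) : ZMod p) = r)).card with hf
  -- Step A : sum of ζ^σ over p-subsets equals 2
  have hA : ∑ t ∈ F, ζ ^ (∑ i ∈ t, (i.val + 1)) = 2 := by
    have hcard : #(univ : Finset (Fin (2 * p))) = 2 * p := by simp
    have hkle : p ≤ #(univ : Finset (Fin (2 * p))) := by rw [hcard]; omega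
    have h1 := Finset.prod_X_add_C_coeff (univ : Finset (Fin (2 * p)))
      (fun i => ζ ^ (i.val + 1)) hkle
    rw [prod_identity hp hodd hζ] at h1
    have h2 : (((X : ℂ[X]) ^ p + 1) ^ 2).coeff p = 2 := by
      have hexp : ((X : ℂ[X]) ^ p + 1) ^ 2 = X ^ (2 * p) + 2 * X ^ p + 1 := by ring
      rw [hexp]
      have hne1 : 2 * p ≠ p := by have := hp.two_le; omega
      have hne2 : p ≠ 0 := hp.pos.ne'
      simp [coeff_X_pow, coeff_one, hne1, hne2]
    rw [h2] at h1
    have h3 : #(univ : Finset (Fin (2 * p))) - p = p := by rw [hcard]; omega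
    rw [h3] at h1
    have h4 : ∑ t ∈ Finset.powersetCard p (univ : Finset (Fin (2 * p))),
        ∏ i ∈ t, ζ ^ (i.val + 1) = 2 := h1.symm
    rw [hF, ← h4]
    refine Finset.sum_congr rfl fun t _ => ?_
    rw [Finset.prod_pow_eq_pow_sum]
  -- Step B : group by residue
  have hB : ∑ r : ZMod p, (f r : ℂ) * ζ ^ (r.val) = 2 := by
    rw [← hA, ← Finset.sum_fiberwise F
      (fun t => ((∑ i ∈ t, (i.val + 1) : ℕ) : ZMod p)) (fun t => ζ ^ (∑ i ∈ t, (i.val + 1)))]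
    refine Finset.sum_congr rfl fun r _ => ?_
    have hconst : ∀ t ∈ F.filter (fun t => ((∑ i ∈ t, (i.val + 1) : ℕ) : ZMod p) = r),
        ζ ^ (∑ i ∈ t, (i.val + 1)) = ζ ^ r.val := by
      intro t ht
      rw [Finset.mem_filter] at ht
      have hmod : (∑ i ∈ t, (i.val + 1)) ≡ r.val [MOD p] := by
        rw [← ZMod.natCast_eq_natCast_iff]
        rw [ht.2]
        rw [ZMod.natCast_val, ZMod.cast_id]
      have hpow : ∀ a : ℕ, ζ ^ a = ζ ^ (a % p) := by
        intro a
        conv_lhs => rw [← Nat.mod_add_div a p]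
        rw [pow_add, pow_mul, hζ.pow_eq_one, one_pow, mul_one]
      rw [hpow, hpow r.val, hmod]
    rw [Finset.sum_congr rfl hconst, Finset.sum_const, hf, nsmul_eq_mul]
  -- Step C : polynomial / minimal polynomial argument
  set g : ℚ[X] := (∑ d ∈ range p, C ((f d : ℚ)) * X ^ d) - C 2 with hg
  have hg0 : aeval ζ g = 0 := by
    have hev : aeval ζ g = (∑ d ∈ range p, (f d : ℂ) * ζ ^ d) - 2 := by
      rw [hg, map_sub, map_sum]
      simp only [map_mul, aeval_C, map_pow, aeval_X, eq_ratCast, Rat.cast_natCast,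
        Rat.cast_ofNat]
    rw [hev]
    have hre : ∑ d ∈ range p, (f (d : ZMod p) : ℂ) * ζ ^ d
        = ∑ r : ZMod p, (f r : ℂ) * ζ ^ (r.val) := by
      refine Finset.sum_nbij' (fun d => ((d : ZMod p))) (fun r => r.val) ?_ ?_ ?_ ?_ ?_
      · intro a _; exact Finset.mem_univ _
      · intro r _; exact Finset.mem_range.mpr (ZMod.val_lt r)
      · intro a ha; exact ZMod.val_cast_of_lt (Finset.mem_range.mp ha)
      · intro r _; exact (ZMod.natCast_val r).trans (ZMod.cast_id p r)
      · intro a ha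
        rw [ZMod.val_cast_of_lt (Finset.mem_range.mp ha)]
    rw [hre, hB]
    ring
  have hdvd : cyclotomic p ℚ ∣ g := by
    rw [cyclotomic_eq_minpoly_rat hζ hp.pos]
    exact minpoly.dvd ℚ ζ hg0
  obtain ⟨q, hq⟩ := hdvd
  have hcycdeg : (cyclotomic p ℚ).natDegree = p - 1 := by
    rw [natDegree_cyclotomic, Nat.totient_prime hp]
  have hdegg : g.natDegree ≤ p - 1 := by
    rw [hg]
    refine le_trans (natDegree_sub_le _ _) ?_
    rw [max_le_iff]
    constructor
    · refine Polynomial.natDegree_sum_le_of_forall_le _ _ fun d hd => ?_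
      refine le_trans (natDegree_C_mul_le _ _) ?_
      rw [natDegree_X_pow]
      have := Finset.mem_range.mp hd
      omega
    · simp
  have hcyc_ne : cyclotomic p ℚ ≠ 0 := cyclotomic_ne_zero p ℚ
  have hqc : ∃ c : ℚ, g = C c * cyclotomic p ℚ := by
    rcases eq_or_ne q 0 with h0 | h0
    · exact ⟨0, by rw [hq, h0, mul_zero, map_zero, zero_mul]⟩
    · have hgne : g ≠ 0 := by
        rw [hq]
        exact mul_ne_zero hcyc_ne h0
      have hdeq : g.natDegree = (cyclotomic p ℚ).natDegree + q.natDegree := by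
        rw [hq, natDegree_mul hcyc_ne h0]
      have hq0 : q.natDegree = 0 := by
        rw [hdeq, hcycdeg] at hdegg
        omega
      refine ⟨q.coeff 0, ?_⟩
      conv_lhs => rw [hq, eq_C_of_natDegree_eq_zero hq0]
      rw [mul_comm]
  obtain ⟨c, hcg⟩ := hqc
  have hcoeffs : ∀ d, d < p → (f (d : ZMod p) : ℚ) - (if d = 0 then 2 else 0) = c := by
    intro d hd
    have h1 : g.coeff d = c := by
      rw [hcg, cyclotomic_prime ℚ p, coeff_C_mul, finset_sum_coeff]
      simp only [coeff_X_pow]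
      rw [Finset.sum_ite_eq (range p) d (fun _ => (1 : ℚ))]
      rw [if_pos (Finset.mem_range.mpr hd)]
      ring
    have h2 : g.coeff d = (f (d : ZMod p) : ℚ) - (if d = 0 then 2 else 0) := by
      rw [hg, coeff_sub, finset_sum_coeff]
      simp only [coeff_C_mul, coeff_X_pow, mul_ite, mul_one, mul_zero]
      rw [Finset.sum_ite_eq (range p) d (fun e => ((f (e : ZMod p) : ℚ)))]
      rw [if_pos (Finset.mem_range.mpr hd), coeff_C]
    rw [← h1, h2]
  -- now extract natural number facts
  have hp3 : 3 ≤ p := by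
    rcases hodd with ⟨m, hm⟩
    have := hp.two_le
    omega
  have hone_ne : (1 : ZMod p) ≠ 0 := by
    intro h
    have := ZMod.val_cast_of_lt (show 1 < p by omega)
    rw [show ((1 : ℕ) : ZMod p) = (1 : ZMod p) by push_cast; rfl, h] at this
    simp [ZMod.val_zero] at this
  have hc1 : (f 1 : ℚ) = c := by
    have := hcoeffs 1 (by omega)
    rw [if_neg one_ne_zero] at this
    rw [show ((1 : ℕ) : ZMod p) = (1 : ZMod p) by push_cast; rfl] at this
    linarith
  have hvals : ∀ r : ZMod p, f r = if r = 0 then f 1 + 2 else f 1 := by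
    intro r
    have hrv := hcoeffs r.val (ZMod.val_lt r)
    rw [ZMod.natCast_val, ZMod.cast_id] at hrv
    have hr0 : r.val = 0 ↔ r = 0 := by
      constructor
      · intro h; have := ZMod.natCast_val (R := ZMod p) r
        rw [ZMod.cast_id] at this
        rw [← this, h]; push_cast; rfl
      · intro h; rw [h, ZMod.val_zero]
    by_cases h : r = 0
    · rw [if_pos h]
      rw [if_pos (hr0.mpr h)] at hrv
      have : (f r : ℚ) = (f 1 : ℚ) + 2 := by rw [hc1]; linarith
      exact_mod_cast this
    · rw [if_neg h]
      rw [if_neg (fun hh => h (hr0.mp hh))] at hrv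
      have : (f r : ℚ) = (f 1 : ℚ) := by rw [hc1]; linarith
      exact_mod_cast this
  -- total count
  have htot : ∑ r : ZMod p, f r = (2 * p).choose p := by
    have hcard : #F = (2 * p).choose p := by
      rw [hF, Finset.card_powersetCard, Finset.card_univ, Fintype.card_fin]
    rw [← hcard]
    rw [Finset.card_eq_sum_card_fiberwise
      (f := fun t => ((∑ i ∈ t, (i.val + 1) : ℕ) : ZMod p)) (t := univ)
      (fun x _ => Finset.mem_univ _)]
  have hsum : ∑ r : ZMod p, f r = p * f 1 + 2 := by
    rw [Finset.sum_congr rfl (fun r _ => hvals r)]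
    have hsplit : ∀ r : ZMod p, (if r = 0 then f 1 + 2 else f 1)
        = f 1 + (if r = 0 then 2 else 0) := by
      intro r; by_cases h : r = 0 <;> simp [h]
    rw [Finset.sum_congr rfl (fun r _ => hsplit r), Finset.sum_add_distrib,
      Finset.sum_const, Finset.sum_ite_eq' Finset.univ (0 : ZMod p) (fun _ => 2),
      if_pos (Finset.mem_univ _)]
    simp [Finset.card_univ, ZMod.card, mul_comm]
  refine ⟨f 1, by rw [← htot, hsum], hvals⟩

/-- For `p` an odd prime, `N = 2p`, and odd `k` with `1 ≤ k ≤ N − 1`, the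
number `α_k` of balanced sign sequences `ξ ∈ {−1,1}^N` with `∑ ξ_i = 0` and
`∑ i·ξ_i ≡ k (mod N)` satisfies `|α_k − C(2p,p)/p| ≤ 2`. -/
theorem stmt7 (p : ℕ) (hp : p.Prime) (hodd : Odd p) (k : ℕ)
    (hk1 : 1 ≤ k) (hk2 : k ≤ 2 * p - 1) (hkodd : Odd k) :
    |(Nat.card {ξ : Fin (2 * p) → ℤ //
        (∀ i, ξ i = 1 ∨ ξ i = -1) ∧ (∑ i, ξ i) = 0 ∧
        (∑ i, ((i.val : ℤ) + 1) * ξ i) ≡ (k : ℤ) [ZMOD (2 * p : ℤ)]} : ℝ)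
      - ((2 * p).choose p : ℝ) / p| ≤ 2 := by
  classical
  haveI : Fact p.Prime := ⟨hp⟩
  haveI : NeZero p := ⟨hp.pos.ne'⟩
  have hp3 : 3 ≤ p := by rcases hodd with ⟨a, ha⟩; have := hp.two_le; omega
  obtain ⟨c, hc, hvals⟩ := key p hp hodd
  set m : ZMod p := (2 : ZMod p)⁻¹ * (-(k : ZMod p)) with hm
  set F : Finset (Finset (Fin (2 * p))) :=
    (Finset.powersetCard p (univ : Finset (Fin (2 * p)))).filter
      (fun t => ((∑ i ∈ t, (i.val + 1) : ℕ) : ZMod p) = m) with hF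
  -- total weighted sum
  have hTn : (∑ i : Fin (2 * p), (i.val + 1)) = 2 * p ^ 2 + p := by
    have h1 : (∑ i : Fin (2 * p), (i.val + 1)) = ∑ j ∈ range (2 * p), (j + 1) :=
      Fin.sum_univ_eq_sum_range (fun j => j + 1) (2 * p)
    have h2 : ∑ j ∈ range (2 * p + 1), j = (∑ j ∈ range (2 * p), (j + 1)) + 0 :=
      Finset.sum_range_succ' (fun j => j) (2 * p)
    have h3 := Finset.sum_range_id_mul_two (2 * p + 1)
    have h4 : (∑ j ∈ range (2 * p), (j + 1)) * 2 = (2 * p ^ 2 + p) * 2 := by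
      calc (∑ j ∈ range (2 * p), (j + 1)) * 2
          = ((∑ j ∈ range (2 * p), (j + 1)) + 0) * 2 := by ring
        _ = (2 * p + 1) * (2 * p + 1 - 1) := by rw [← h2]; exact h3
        _ = (2 * p ^ 2 + p) * 2 := by
            have he : 2 * p + 1 - 1 = 2 * p := by omega
            rw [he]; ring
    exact h1.trans (Nat.eq_of_mul_eq_mul_right (by omega) h4)
  have hT : (∑ i : Fin (2 * p), ((i.val : ℤ) + 1)) = 2 * (p : ℤ) ^ 2 + p := by
    have : (∑ i : Fin (2 * p), ((i.val : ℤ) + 1))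
        = ((∑ i : Fin (2 * p), (i.val + 1) : ℕ) : ℤ) := by push_cast; rfl
    rw [this, hTn]; push_cast; ring
  have h2ne : (2 : ZMod p) ≠ 0 := by
    intro h
    have h' : ((2 : ℕ) : ZMod p) = 0 := by push_cast; exact h
    rw [ZMod.natCast_eq_zero_iff] at h'
    have := Nat.le_of_dvd (by omega) h'
    omega
  -- the modular condition translation
  have hcond : ∀ σ : ℕ,
      ((2 * (p : ℤ) ^ 2 + p - 2 * (σ : ℤ)) ≡ (k : ℤ) [ZMOD (2 * p : ℤ)]
        ↔ ((σ : ℕ) : ZMod p) = m) := by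
    intro σ
    rw [Int.modEq_iff_dvd]
    have heq : (k : ℤ) - (2 * (p : ℤ) ^ 2 + p - 2 * σ)
        = k + 2 * σ - 2 * (p : ℤ) ^ 2 - p := by ring
    rw [heq]
    set e : ℤ := (k : ℤ) + 2 * σ - 2 * (p : ℤ) ^ 2 - p with he
    have h2dvd : (2 : ℤ) ∣ e := by
      rcases hkodd with ⟨b, hb⟩
      rcases hodd with ⟨a, ha⟩
      refine ⟨(b : ℤ) + σ - (p : ℤ) ^ 2 - a, ?_⟩
      rw [he, hb, ha]; push_cast; ring
    have hstep : (2 * (p : ℤ)) ∣ e ↔ ((p : ℤ)) ∣ e := by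
      constructor
      · intro h; exact dvd_trans ⟨2, by ring⟩ h
      · intro h
        obtain ⟨d, hd⟩ := h2dvd
        have hpd : (p : ℤ) ∣ 2 * d := by rw [← hd]; exact h
        have hprime : Prime (p : ℤ) := Nat.prime_iff_prime_int.mp hp
        rcases hprime.dvd_mul.mp hpd with h' | h'
        · exfalso
          have : (p : ℕ) ∣ 2 := by exact_mod_cast h'
          have := Nat.le_of_dvd (by omega) this
          omega
        · obtain ⟨d', hd'⟩ := h'
          exact ⟨d', by rw [hd, hd']; ring⟩
    rw [hstep]
    rw [← ZMod.intCast_zmod_eq_zero_iff_dvd e p]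
    have hcast : ((e : ℤ) : ZMod p) = (k : ZMod p) + 2 * (σ : ZMod p) := by
      rw [he]
      push_cast
      rw [ZMod.natCast_self]
      ring
    rw [hcast]
    constructor
    · intro h
      have h2 : 2 * (σ : ZMod p) = -(k : ZMod p) := by linear_combination h
      rw [hm, ← h2, inv_mul_cancel_left₀ h2ne]
    · intro h
      rw [h, hm, mul_inv_cancel_left₀ h2ne]
      ring
  -- the bijection
  have filter_eq : ∀ t : Finset (Fin (2 * p)),
      univ.filter (fun i => (if i ∈ t then (-1 : ℤ) else 1) = -1) = t := by
    intro t; ext i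
    by_cases h : i ∈ t <;> simp [h]
  let e : {ξ : Fin (2 * p) → ℤ //
        (∀ i, ξ i = 1 ∨ ξ i = -1) ∧ (∑ i, ξ i) = 0 ∧
        (∑ i, ((i.val : ℤ) + 1) * ξ i) ≡ (k : ℤ) [ZMOD (2 * p : ℤ)]}
      ≃ {t : Finset (Fin (2 * p)) // t ∈ F} := by
    refine Equiv.mk
      (fun ξ => ⟨univ.filter (fun i => ξ.1 i = -1), ?_⟩)
      (fun t => ⟨fun i => if i ∈ t.1 then -1 else 1, ?_, ?_, ?_⟩)
      ?_ ?_
    · -- forward membership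
      obtain ⟨ξ, h1, h2, h3⟩ := ξ
      show (univ.filter (fun i => ξ i = -1)) ∈ F
      have hs1 := sum_mul_pm (fun _ => (1 : ℤ)) ξ h1
      simp only [one_mul, Finset.sum_const, Finset.card_univ, Fintype.card_fin,
        nsmul_eq_mul, mul_one] at hs1
      rw [h2] at hs1
      have hle : (univ.filter (fun i => ξ i = -1)).card ≤ 2 * p :=
        le_trans (Finset.card_filter_le _ _) (by simp)
      have hcard : (univ.filter (fun i => ξ i = -1)).card = p := by omega
      have hs2 := sum_mul_pm (fun i => ((i.val : ℤ) + 1)) ξ h1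
      rw [hT] at hs2
      rw [hs2] at h3
      have hσ : (∑ i ∈ univ.filter (fun i => ξ i = -1), ((i.val : ℤ) + 1))
          = ((∑ i ∈ univ.filter (fun i => ξ i = -1), (i.val + 1) : ℕ) : ℤ) := by
        push_cast; rfl
      rw [hσ] at h3
      rw [hF, Finset.mem_filter, mem_powersetCard]
      exact ⟨⟨Finset.subset_univ _, hcard⟩, (hcond _).mp h3⟩
    · intro i; by_cases h : i ∈ t.1 <;> simp [h]
    · -- sum zero
      obtain ⟨t, ht⟩ := t
      rw [hF, Finset.mem_filter, mem_powersetCard] at ht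
      have hs1 := sum_mul_pm (fun _ => (1 : ℤ)) (fun i => if i ∈ t then -1 else 1)
        (fun i => by by_cases h : i ∈ t <;> simp [h])
      simp only [one_mul, Finset.sum_const, Finset.card_univ, Fintype.card_fin,
        nsmul_eq_mul, mul_one] at hs1
      rw [filter_eq t, ht.1.2] at hs1
      rw [hs1]; push_cast; ring
    · -- congruence
      obtain ⟨t, ht⟩ := t
      rw [hF, Finset.mem_filter, mem_powersetCard] at ht
      have hs2 := sum_mul_pm (fun i => ((i.val : ℤ) + 1)) (fun i => if i ∈ t then -1 else 1)
        (fun i => by by_cases h : i ∈ t <;> simp [h])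
      rw [hT, filter_eq t] at hs2
      rw [hs2]
      have hσ : (∑ i ∈ t, ((i.val : ℤ) + 1)) = ((∑ i ∈ t, (i.val + 1) : ℕ) : ℤ) := by
        push_cast; rfl
      rw [hσ]
      exact (hcond _).mpr ht.2
    · -- left inverse
      intro ξ
      apply Subtype.ext
      funext i
      simp only []
      by_cases h : ξ.1 i = -1
      · simp [Finset.mem_filter, h]
      · rcases ξ.2.1 i with h' | h'
        · simp [Finset.mem_filter, h, h']
        · exact absurd h' h
    · -- right inverse
      intro t
      apply Subtype.ext
      simp only []
      exact filter_eq t.1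
  have hcount : Nat.card {ξ : Fin (2 * p) → ℤ //
        (∀ i, ξ i = 1 ∨ ξ i = -1) ∧ (∑ i, ξ i) = 0 ∧
        (∑ i, ((i.val : ℤ) + 1) * ξ i) ≡ (k : ℤ) [ZMOD (2 * p : ℤ)]} = F.card := by
    rw [Nat.card_congr e]
    exact Nat.card_eq_finsetCard F
  rw [hcount, hF]
  rw [hvals m]
  -- final arithmetic
  have hp0 : (0 : ℝ) < p := by exact_mod_cast hp.pos
  have hC : ((2 * p).choose p : ℝ) = p * c + 2 := by exact_mod_cast hc.symm
  rw [hC]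
  have hp1 : (1 : ℝ) ≤ p := by exact_mod_cast hp.one_lt.le
  have hfrac : (2 : ℝ) / p ≤ 2 := by
    rw [div_le_iff₀ hp0]; nlinarith
  have hfrac0 : (0 : ℝ) < 2 / p := by positivity
  by_cases hm0 : m = 0
  · rw [if_pos hm0]
    have : ((c + 2 : ℕ) : ℝ) - ((p : ℝ) * c + 2) / p = 2 - 2 / p := by
      field_simp
      push_cast; ring
    rw [this, abs_of_nonneg (by linarith)]
    linarith
  · rw [if_neg hm0]
    have : ((c : ℕ) : ℝ) - ((p : ℝ) * c + 2) / p = -(2 / p) := by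
      field_simp
      ring
    rw [this, abs_neg, abs_of_nonneg (by linarith)]
    linarith
end

section
/- Let p be an odd prime, N = 2p, and fix two distinct sites x₁ ≠ x₂ in ℤ/Nℤ. For j ∈ {0, 1, 2} and odd k, let β_k^j be the number of balanced sign sequences ξ ∈ {−1,1}^N with ∑ ξ_i = 0, exactly j of the two values ξ(x₁), ξ(x₂) equal to +1 (with ξ(x₁)=1, ξ(x₂)=−1 in the case j=1), and ∑ i·ξ_i ≡ k (mod N). Then |β_k^j − C(2p−2, p−j)/p| ≤ p for every odd k and every j ∈ {0,1,2}. -/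
open Polynomial Finset Complex Real

namespace Stmt8

noncomputable def Q (p : ℕ) (α : ℂ) : Polynomial ℂ := ∑ i ∈ range p, X ^ i * C ((-α) ^ (p - 1 - i))

lemma Q_mul {p : ℕ} (hodd : Odd p) {α : ℂ} (hα : α ^ p = 1) :
    (X + C α) * Q p α = X ^ p + 1 := by
  have h := geom_sum₂_mul (X : Polynomial ℂ) (C (-α)) p
  have h3 : (C (-α) : Polynomial ℂ) ^ p = -1 := by
    rw [← C_pow, hodd.neg_pow, hα, map_neg, map_one]
  rw [h3, sub_neg_eq_add] at h
  calc (X + C α) * Q p α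
      = (∑ i ∈ range p, X ^ i * (C (-α)) ^ (p - 1 - i)) * (X - C (-α)) := by
        rw [mul_comm]
        congr 1
        · exact Finset.sum_congr rfl fun i _ => by rw [← C_pow]
        · rw [map_neg, sub_neg_eq_add]
    _ = X ^ p + 1 := h

lemma Q_coeff_norm {p : ℕ} {α : ℂ} (hα : ‖α‖ = 1) (n : ℕ) : ‖(Q p α).coeff n‖ ≤ 1 := by
  unfold Q
  rw [finset_sum_coeff]
  have : ∀ i ∈ range p, (X ^ i * C ((-α) ^ (p - 1 - i)) : Polynomial ℂ).coeff n
      = if n = i then (-α) ^ (p - 1 - i) else 0 := by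
    intro i _
    rw [mul_comm, coeff_C_mul, coeff_X_pow]
    split <;> simp
  rw [Finset.sum_congr rfl this, Finset.sum_ite_eq]
  split
  · rw [norm_pow, norm_neg, hα, one_pow]
  · simp

lemma prod_sub {p : ℕ} (hp : p ≠ 0) {ζ : ℂ} (hζ : IsPrimitiveRoot ζ p) :
    ∏ r ∈ range p, (X - C (ζ ^ r)) = X ^ p - 1 := by
  have hroots : (X ^ p - 1 : Polynomial ℂ).roots = (Multiset.range p).map (fun r => ζ ^ r * 1) := by
    have := hζ.nthRoots_eq (one_pow p)
    rwa [Polynomial.nthRoots, map_one] at this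
  have hmonic : (X ^ p - 1 : Polynomial ℂ).Monic := by
    have := monic_X_pow_sub_C (1 : ℂ) hp
    rwa [map_one] at this
  have hdeg : (X ^ p - 1 : Polynomial ℂ).natDegree = p := by
    have := natDegree_X_pow_sub_C (n := p) (r := (1 : ℂ))
    rwa [map_one] at this
  have hcard : Multiset.card (X ^ p - 1 : Polynomial ℂ).roots = (X ^ p - 1 : Polynomial ℂ).natDegree := by
    rw [hroots, hdeg, Multiset.card_map, Multiset.card_range]
  have key := prod_multiset_X_sub_C_of_monic_of_roots_card_eq hmonic hcard
  rw [hroots, Multiset.map_map] at key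
  rw [← key]
  rw [Finset.prod_eq_multiset_prod]
  rw [Finset.range_val]
  simp

lemma prod_add {p : ℕ} (hp : p ≠ 0) (hodd : Odd p) {ζ : ℂ} (hζ : IsPrimitiveRoot ζ p) :
    ∏ r ∈ range p, (X + C (ζ ^ r)) = X ^ p + 1 := by
  have h := congrArg (fun q : Polynomial ℂ => q.comp (-X)) (prod_sub hp hζ)
  simp only [Polynomial.prod_comp, sub_comp, X_comp, C_comp, one_comp, pow_comp] at h
  have hneg : ∀ r : ℂ, (-X - C r : Polynomial ℂ) = -1 * (X + C r) := by intro r; ring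
  simp only [hneg] at h
  rw [Finset.prod_mul_distrib, Finset.prod_const, Finset.card_range, hodd.neg_pow, one_pow] at h
  -- h : -1 * ∏ (X + C (ζ^r)) = -X^p - 1
  rw [hodd.neg_pow (X : Polynomial ℂ)] at h
  linear_combination -h

lemma prod_shift {p : ℕ} (hp : p ≠ 0) (hodd : Odd p) {ζ : ℂ} (hζ : IsPrimitiveRoot ζ p) :
    ∏ n ∈ range p, (X + C (ζ ^ (n + 1))) = X ^ p + 1 := by
  have e1 : (∏ n ∈ range p, (X + C (ζ ^ (n + 1)))) * (X + C (ζ ^ 0))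
      = (∏ r ∈ range p, (X + C (ζ ^ r))) * (X + C (ζ ^ p)) := by
    rw [← Finset.prod_range_succ' (fun r => (X : Polynomial ℂ) + C (ζ ^ r)) p, Finset.prod_range_succ]
  rw [hζ.pow_eq_one, pow_zero] at e1
  exact mul_right_cancel₀ (X_add_C_ne_zero 1) (by rw [e1, prod_add hp hodd hζ])

lemma prod_full {p : ℕ} (hp : p ≠ 0) (hodd : Odd p) {ζ : ℂ} (hζ : IsPrimitiveRoot ζ p) :
    ∏ i : Fin (2 * p), (X + C (ζ ^ (i.val + 1))) = (X ^ p + 1) ^ 2 := by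
  rw [Fin.prod_univ_eq_prod_range (fun n => X + C (ζ ^ (n + 1))) (2 * p), two_mul,
    Finset.prod_range_add]
  have hper : ∀ n ∈ range p, (X + C (ζ ^ (p + n + 1)) : Polynomial ℂ) = X + C (ζ ^ (n + 1)) := by
    intro n _
    rw [add_assoc, pow_add, hζ.pow_eq_one, one_mul]
  rw [Finset.prod_congr rfl hper, prod_shift hp hodd hζ, sq]

lemma prod_S {p : ℕ} (hp : p ≠ 0) (hodd : Odd p) {ζ : ℂ} (hζ : IsPrimitiveRoot ζ p)
    {x₁ x₂ : Fin (2 * p)} (hx : x₁ ≠ x₂) :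
    (X + C (ζ ^ (x₁.val + 1))) * ((X + C (ζ ^ (x₂.val + 1))) *
      ∏ i ∈ (univ \ {x₁, x₂} : Finset (Fin (2 * p))), (X + C (ζ ^ (i.val + 1))))
    = (X ^ p + 1) ^ 2 := by
  rw [← prod_full hp hodd hζ]
  rw [Finset.prod_eq_mul_prod_sdiff_singleton_of_mem (mem_univ x₁) (fun i => X + C (ζ ^ (i.val + 1)))]
  congr 1
  have hmem : x₂ ∈ (univ \ {x₁} : Finset (Fin (2 * p))) := by simp [hx.symm]
  rw [Finset.prod_eq_mul_prod_sdiff_singleton_of_mem hmem (fun i => X + C (ζ ^ (i.val + 1)))]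
  congr 2
  ext i
  simp only [mem_sdiff, mem_univ, true_and, mem_singleton, mem_insert]
  tauto



lemma QQ_eq {p : ℕ} (hp : p ≠ 0) (hodd : Odd p) {ζ : ℂ} (hζ : IsPrimitiveRoot ζ p)
    {x₁ x₂ : Fin (2 * p)} (hx : x₁ ≠ x₂) :
    ∏ i ∈ (univ \ {x₁, x₂} : Finset (Fin (2 * p))), (X + C (ζ ^ (i.val + 1)))
    = Q p (ζ ^ (x₁.val + 1)) * Q p (ζ ^ (x₂.val + 1)) := by
  set α := ζ ^ (x₁.val + 1)
  set β := ζ ^ (x₂.val + 1)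
  have hαp : α ^ p = 1 := by rw [← pow_mul, mul_comm, pow_mul, hζ.pow_eq_one, one_pow]
  have hβp : β ^ p = 1 := by rw [← pow_mul, mul_comm, pow_mul, hζ.pow_eq_one, one_pow]
  have key : (X + C α) * ((X + C β) * (Q p α * Q p β)) = (X ^ p + 1) ^ 2 := by
    calc (X + C α) * ((X + C β) * (Q p α * Q p β))
        = ((X + C α) * Q p α) * ((X + C β) * Q p β) := by ring
      _ = (X ^ p + 1) ^ 2 := by rw [Q_mul hodd hαp, Q_mul hodd hβp, sq]
  have h2 := prod_S hp hodd hζ hx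
  rw [← key] at h2
  have e1 := mul_left_cancel₀ (X_add_C_ne_zero α) h2
  exact mul_left_cancel₀ (X_add_C_ne_zero β) e1

lemma charSum {p : ℕ} (hp3 : 3 ≤ p) (hodd : Odd p) {ζ : ℂ} (hζ : IsPrimitiveRoot ζ p)
    {x₁ x₂ : Fin (2 * p)} (hx : x₁ ≠ x₂) {j : ℕ} (hj : j ≤ 2) :
    ‖∑ A ∈ Finset.powersetCard (p - j) (univ \ {x₁, x₂} : Finset (Fin (2 * p))),
        ∏ i ∈ A, ζ ^ (i.val + 1)‖ ≤ (p : ℝ) + 1 := by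
  have hp : p ≠ 0 := by omega
  set S : Finset (Fin (2 * p)) := univ \ {x₁, x₂} with hS
  have hcardS : #S = 2 * p - 2 := by
    rw [hS, card_sdiff_of_subset (subset_univ _), card_univ, Fintype.card_fin]
    have : #({x₁, x₂} : Finset (Fin (2 * p))) = 2 := by
      rw [card_insert_of_notMem (by simpa using hx), card_singleton]
    omega
  have hk1 : p - 2 + j ≤ #S := by omega
  have hk2 : #S - (p - 2 + j) = p - j := by omega
  have hnorm : ‖ζ‖ = 1 := Complex.norm_eq_one_of_pow_eq_one hζ.pow_eq_one hp
  have hα : ‖ζ ^ (x₁.val + 1)‖ = 1 := by rw [norm_pow, hnorm, one_pow]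
  have hβ : ‖ζ ^ (x₂.val + 1)‖ = 1 := by rw [norm_pow, hnorm, one_pow]
  have key : ∑ A ∈ Finset.powersetCard (p - j) S, ∏ i ∈ A, ζ ^ (i.val + 1)
      = (Q p (ζ ^ (x₁.val + 1)) * Q p (ζ ^ (x₂.val + 1))).coeff (p - 2 + j) := by
    rw [← QQ_eq hp hodd hζ hx, Finset.prod_X_add_C_coeff S (fun i => ζ ^ (i.val + 1)) hk1, hk2]
  rw [key, coeff_mul]
  calc ‖∑ x ∈ Finset.HasAntidiagonal.antidiagonal (p - 2 + j),
        (Q p (ζ ^ (x₁.val + 1))).coeff x.1 * (Q p (ζ ^ (x₂.val + 1))).coeff x.2‖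
      ≤ ∑ x ∈ Finset.HasAntidiagonal.antidiagonal (p - 2 + j), ‖(Q p (ζ ^ (x₁.val + 1))).coeff x.1
          * (Q p (ζ ^ (x₂.val + 1))).coeff x.2‖ := norm_sum_le _ _
    _ ≤ ∑ _x ∈ Finset.HasAntidiagonal.antidiagonal (p - 2 + j), 1 := by
        refine Finset.sum_le_sum fun x _ => ?_
        rw [norm_mul]
        exact mul_le_one₀ (Q_coeff_norm hα _) (norm_nonneg _) (Q_coeff_norm hβ _)
    _ = ((p - 2 + j : ℕ) : ℝ) + 1 := by
        rw [Finset.sum_const, Finset.Nat.card_antidiagonal]; simp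
    _ ≤ (p : ℝ) + 1 := by
        have : ((p - 2 + j : ℕ) : ℝ) ≤ (p : ℝ) := by exact_mod_cast (by omega : p - 2 + j ≤ p)
        linarith

lemma delta {p : ℕ} (hp : p ≠ 0) {ω : ℂ} (hω : IsPrimitiveRoot ω p) (d : ℤ) :
    ∑ t ∈ Finset.range p, (ω ^ d) ^ t = if (p : ℤ) ∣ d then (p : ℂ) else 0 := by
  by_cases h : (p : ℤ) ∣ d
  · have h1 : ω ^ d = 1 := (hω.zpow_eq_one_iff_dvd d).mpr h
    simp [h1, h]
  · have h1 : ω ^ d ≠ 1 := fun hc => h ((hω.zpow_eq_one_iff_dvd d).mp hc)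
    rw [geom_sum_eq h1, if_neg h]
    have h2 : (ω ^ d) ^ p = 1 := by
      rw [← zpow_natCast (ω ^ d) p, ← zpow_mul, mul_comm, zpow_mul, zpow_natCast, hω.pow_eq_one,
        one_zpow]
    rw [h2, sub_self, zero_div]

lemma sum_weights (p : ℕ) : ∑ i : Fin (2 * p), ((i.val : ℤ) + 1) = p * (2 * p + 1) := by
  rw [Fin.sum_univ_eq_sum_range (fun n => (n : ℤ) + 1) (2 * p)]
  have hN : ∀ N : ℕ, 2 * ∑ n ∈ range N, ((n : ℤ) + 1) = N * (N + 1) := by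
    intro N
    induction N with
    | zero => simp
    | succ n ih =>
      rw [Finset.sum_range_succ, mul_add, ih]
      push_cast
      ring
  have := hN (2 * p)
  push_cast at this
  linarith

lemma sum_xi {p : ℕ} (ξ : Fin (2 * p) → ℤ) (h1 : ∀ i, ξ i = 1 ∨ ξ i = -1) :
    (∑ i, ξ i) = 2 * (#(univ.filter (fun i => ξ i = 1)) : ℤ) - 2 * p := by
  classical
  have hrep : ∀ i ∈ univ, ξ i = if ξ i = 1 then 1 else -1 := by
    intro i _; rcases h1 i with h | h <;> simp [h]
  rw [Finset.sum_congr rfl hrep, Finset.sum_ite, Finset.sum_const, Finset.sum_const]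
  simp only [nsmul_eq_mul, mul_one, mul_neg_one]
  have hcard := Finset.card_filter_add_card_filter_not (s := (univ : Finset (Fin (2*p))))
    (p := fun i => ξ i = 1)
  rw [card_univ, Fintype.card_fin] at hcard
  have hc2 : (#(univ.filter (fun i => ξ i = 1)) : ℤ)
      + (#(univ.filter (fun i => ¬ ξ i = 1)) : ℤ) = 2 * p := by exact_mod_cast hcard
  linarith

lemma sum_wxi {p : ℕ} (ξ : Fin (2 * p) → ℤ) (h1 : ∀ i, ξ i = 1 ∨ ξ i = -1) :
    (∑ i, ((i.val : ℤ) + 1) * ξ i)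
      = 2 * (∑ i ∈ univ.filter (fun i => ξ i = 1), ((i.val : ℤ) + 1)) - p * (2 * p + 1) := by
  classical
  have hrep : ∀ i ∈ univ, ((i.val : ℤ) + 1) * ξ i
      = if ξ i = 1 then ((i.val : ℤ) + 1) else -(((i.val : ℤ) + 1)) := by
    intro i _; rcases h1 i with h | h <;> simp [h]
  rw [Finset.sum_congr rfl hrep, Finset.sum_ite, Finset.sum_neg_distrib]
  rw [Finset.filter_not, Finset.sum_sdiff_eq_sub (Finset.filter_subset _ _), sum_weights]
  ring

lemma cong_iff {p : ℕ} {k m : ℤ} (hm : k + p = 2 * m) (s : ℤ) :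
    (2 * s - p * (2 * p + 1) ≡ k [ZMOD (2 * (p:ℤ))]) ↔ s ≡ m [ZMOD (p : ℤ)] := by
  rw [Int.modEq_iff_dvd, Int.modEq_iff_dvd]
  have e : k - (2 * s - (p:ℤ) * (2 * p + 1)) = 2 * (m - s + p * p) := by linear_combination hm
  rw [e, mul_dvd_mul_iff_left (by norm_num : (2:ℤ) ≠ 0),
    show m - s + (p:ℤ) * p = (p:ℤ) * p + (m - s) by ring,
    dvd_add_right (dvd_mul_right _ _)]

lemma count_eq {p : ℕ} (hp3 : 3 ≤ p) {x₁ x₂ : Fin (2 * p)} (hx : x₁ ≠ x₂) {j : ℕ} (hj : j ≤ 2)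
    (k : ℕ) (m : ℤ) (hm : (k : ℤ) + p = 2 * m)
    (F : Finset (Fin (2 * p))) (hFsub : F ⊆ {x₁, x₂}) (hx₁F : x₁ ∈ F ↔ 1 ≤ j)
    (hx₂F : x₂ ∈ F ↔ j = 2) (hFcard : #F = j) :
    Nat.card {ξ : Fin (2 * p) → ℤ //
          (∀ i, ξ i = 1 ∨ ξ i = -1) ∧
          ξ x₁ = (if 1 ≤ j then 1 else -1) ∧
          ξ x₂ = (if j = 2 then 1 else -1) ∧
          (∑ i, ξ i) = 0 ∧
          (∑ i, ((i.val : ℤ) + 1) * ξ i) ≡ (k : ℤ) [ZMOD (2 * p : ℤ)]}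
    = #((Finset.powersetCard (p - j) ((univ : Finset (Fin (2 * p))) \ {x₁, x₂})).filter
        (fun A => (∑ i ∈ A, ((i.val : ℤ) + 1)) + (∑ i ∈ F, ((i.val : ℤ) + 1))
          ≡ m [ZMOD (p : ℤ)])) := by
  classical
  set S : Finset (Fin (2 * p)) := univ \ {x₁, x₂} with hS
  set T := (Finset.powersetCard (p - j) S).filter
      (fun A => (∑ i ∈ A, ((i.val : ℤ) + 1)) + (∑ i ∈ F, ((i.val : ℤ) + 1))
        ≡ m [ZMOD (p : ℤ)]) with hT
  have hdisjF : ∀ A : Finset (Fin (2 * p)), A ⊆ S → Disjoint A F := by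
    intro A hA
    refine Finset.disjoint_left.mpr fun i hiA hiF => ?_
    have h1 : i ∈ S := hA hiA
    have h2 : i ∈ ({x₁, x₂} : Finset (Fin (2 * p))) := hFsub hiF
    rw [hS, mem_sdiff] at h1
    exact h1.2 h2
  -- the map
  have key : ∀ ξ : Fin (2 * p) → ℤ, (∀ i, ξ i = 1 ∨ ξ i = -1) →
      ξ x₁ = (if 1 ≤ j then 1 else -1) → ξ x₂ = (if j = 2 then 1 else -1) →
      univ.filter (fun i => ξ i = 1) = (univ.filter (fun i => ξ i = 1) \ {x₁, x₂}) ∪ F := by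
    intro ξ h1 h2 h3
    have hPx₁ : x₁ ∈ univ.filter (fun i => ξ i = 1) ↔ 1 ≤ j := by
      by_cases hc : 1 ≤ j
      · rw [if_pos hc] at h2; simp [h2, hc]
      · rw [if_neg hc] at h2
        simp only [mem_filter, mem_univ, true_and, h2]
        norm_num
        omega
    have hPx₂ : x₂ ∈ univ.filter (fun i => ξ i = 1) ↔ j = 2 := by
      by_cases hc : j = 2
      · rw [if_pos hc] at h3; simp [h3, hc]
      · rw [if_neg hc] at h3
        simp only [mem_filter, mem_univ, true_and, h3]
        norm_num
        exact hc
    ext i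
    by_cases hi1 : i = x₁
    · subst hi1
      simp only [mem_union, mem_sdiff, mem_insert, mem_singleton, hPx₁, hx₁F]
      tauto
    · by_cases hi2 : i = x₂
      · subst hi2
        simp only [mem_union, mem_sdiff, mem_insert, mem_singleton, hPx₂, hx₂F]
        tauto
      · have hiF : i ∉ F := fun hc => by
          have := hFsub hc
          simp only [mem_insert, mem_singleton] at this
          tauto
        simp only [mem_union, mem_sdiff, mem_insert, mem_singleton, hiF]
        tauto
  have main : Nat.card {ξ : Fin (2 * p) → ℤ //
          (∀ i, ξ i = 1 ∨ ξ i = -1) ∧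
          ξ x₁ = (if 1 ≤ j then 1 else -1) ∧
          ξ x₂ = (if j = 2 then 1 else -1) ∧
          (∑ i, ξ i) = 0 ∧
          (∑ i, ((i.val : ℤ) + 1) * ξ i) ≡ (k : ℤ) [ZMOD (2 * p : ℤ)]} = Nat.card T := by
    apply Nat.card_eq_of_bijective
      (f := fun ξs => ⟨univ.filter (fun i => ξs.1 i = 1) \ {x₁, x₂}, by
        obtain ⟨ξ, h1, h2, h3, h4, h5⟩ := ξs
        set P := univ.filter (fun i => ξ i = 1) with hP
        set A := P \ {x₁, x₂} with hA
        have hPA : P = A ∪ F := key ξ h1 h2 h3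
        have hASub : A ⊆ S := by
          rw [hA, hS]
          exact Finset.sdiff_subset_sdiff (subset_univ P) le_rfl
        have hdisj : Disjoint A F := hdisjF A hASub
        have hcardP : #P = p := by
          have hs := sum_xi ξ h1
          rw [h4] at hs
          have : (#P : ℤ) = p := by rw [hP]; linarith
          exact_mod_cast this
        have hcardA : #A = p - j := by
          have : #P = #A + #F := by rw [hPA, Finset.card_union_of_disjoint hdisj]
          omega
        have hcong : (∑ i ∈ A, ((i.val : ℤ) + 1)) + (∑ i ∈ F, ((i.val : ℤ) + 1))
            ≡ m [ZMOD (p : ℤ)] := by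
          have hw := sum_wxi ξ h1
          rw [← hP] at hw
          have h5' : 2 * (∑ i ∈ P, ((i.val : ℤ) + 1)) - p * (2 * p + 1)
              ≡ (k : ℤ) [ZMOD (2 * (p : ℤ))] := by
            rw [← hw]
            exact h5
          have := (cong_iff hm _).mp h5'
          rwa [hPA, Finset.sum_union hdisj] at this
        rw [hT, mem_filter, Finset.mem_powersetCard]
        exact ⟨⟨hASub, hcardA⟩, hcong⟩⟩)
    constructor
    · -- injective
      rintro ⟨ξ, h1, h2, h3, h4, h5⟩ ⟨ξ', h1', h2', h3', h4', h5'⟩ heq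
      simp only [Subtype.mk.injEq] at heq ⊢
      funext i
      by_cases hi1 : i = x₁
      · subst hi1; rw [h2, h2']
      · by_cases hi2 : i = x₂
        · subst hi2; rw [h3, h3']
        · have hmem : (i ∈ univ.filter (fun i => ξ i = 1)) ↔ (i ∈ univ.filter (fun i => ξ' i = 1)) := by
            have e1 : i ∈ univ.filter (fun i => ξ i = 1) \ {x₁, x₂}
                ↔ i ∈ univ.filter (fun i => ξ' i = 1) \ {x₁, x₂} := by rw [heq]
            simpa [mem_sdiff, hi1, hi2] using e1
          simp only [mem_filter, mem_univ, true_and] at hmem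
          rcases h1 i with ha | ha <;> rcases h1' i with hb | hb <;>
            simp [ha, hb] at hmem ⊢ <;> omega
    · -- surjective
      rintro ⟨A, hA⟩
      rw [hT, mem_filter, Finset.mem_powersetCard] at hA
      obtain ⟨⟨hASub, hAcard⟩, hAcong⟩ := hA
      have hdisj : Disjoint A F := hdisjF A hASub
      set ξ : Fin (2 * p) → ℤ := fun i => if i ∈ A ∪ F then 1 else -1 with hξ
      have h1 : ∀ i, ξ i = 1 ∨ ξ i = -1 := fun i => by
        rw [hξ]; dsimp only; split <;> simp
      have hPAF : univ.filter (fun i => ξ i = 1) = A ∪ F := by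
        ext i
        simp only [mem_filter, mem_univ, true_and, hξ]
        split <;> rename_i h
        · simpa using h
        · simpa using h
      have hx₁A : x₁ ∉ A := fun hc => by
        have := hASub hc; rw [hS, mem_sdiff] at this; simp at this
      have hx₂A : x₂ ∉ A := fun hc => by
        have := hASub hc; rw [hS, mem_sdiff] at this; simp at this
      have h2 : ξ x₁ = (if 1 ≤ j then 1 else -1) := by
        by_cases hc : 1 ≤ j
        · have : x₁ ∈ A ∪ F := mem_union_right _ (hx₁F.mpr hc)
          rw [hξ]; simp only [this, if_pos, hc, if_true]
        · have : x₁ ∉ A ∪ F := by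
            rw [mem_union]; push_neg
            exact ⟨hx₁A, fun hc2 => hc (hx₁F.mp hc2)⟩
          rw [hξ]; simp only [this, if_neg hc, if_false]
      have h3 : ξ x₂ = (if j = 2 then 1 else -1) := by
        by_cases hc : j = 2
        · have : x₂ ∈ A ∪ F := mem_union_right _ (hx₂F.mpr hc)
          rw [hξ]; simp only [this, if_pos, hc, if_true]
        · have : x₂ ∉ A ∪ F := by
            rw [mem_union]; push_neg
            exact ⟨hx₂A, fun hc2 => hc (hx₂F.mp hc2)⟩
          rw [hξ]; simp only [this, if_neg hc, if_false]
      have hcardAF : #(A ∪ F) = p := by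
        rw [Finset.card_union_of_disjoint hdisj, hAcard, hFcard]; omega
      have h4 : (∑ i, ξ i) = 0 := by
        rw [sum_xi ξ h1, hPAF, hcardAF]; ring
      have h5 : (∑ i, ((i.val : ℤ) + 1) * ξ i) ≡ (k : ℤ) [ZMOD (2 * p : ℤ)] := by
        have hw := sum_wxi ξ h1
        rw [hPAF, Finset.sum_union hdisj] at hw
        have := (cong_iff hm ((∑ i ∈ A, ((i.val : ℤ) + 1)) + (∑ i ∈ F, ((i.val : ℤ) + 1)))).mpr hAcong
        rw [← hw] at this
        exact this
      refine ⟨⟨ξ, h1, h2, h3, h4, h5⟩, ?_⟩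
      simp only [Subtype.mk.injEq]
      rw [hPAF]
      ext i
      simp only [mem_sdiff, mem_union, mem_insert, mem_singleton]
      constructor
      · rintro ⟨hAF | hF, hni⟩
        · exact hAF
        · exact absurd (by simpa [mem_insert, mem_singleton] using hFsub hF) hni
      · intro hiA
        have hiS := hASub hiA
        rw [hS, mem_sdiff, mem_insert] at hiS
        simp only [mem_singleton] at hiS
        exact ⟨Or.inl hiA, by tauto⟩
  rw [main, hT]
  exact Nat.card_eq_finsetCard _

end Stmt8

open Stmt8 Finset Complex Real in
/-- For `p` an odd prime, `N = 2p`, two distinct sites `x₁ ≠ x₂`, odd `k`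
with `1 ≤ k ≤ N−1`, and `j ∈ {0,1,2}`, the number `β_k^j` of balanced sign sequences with
prescribed values at `x₁, x₂` (`j` of them equal to `+1`, with `ξ x₁ = 1, ξ x₂ = −1` for
`j = 1`), zero total sum and weighted sum `∑ i·ξ_i ≡ k (mod N)` satisfies
`|β_k^j − C(2p−2, p−j)/p| ≤ p`. -/
theorem stmt8 (p : ℕ) (hp : p.Prime) (hodd : Odd p)
    (x₁ x₂ : Fin (2 * p)) (hx : x₁ ≠ x₂) (k : ℕ)
    (hk1 : 1 ≤ k) (hk2 : k ≤ 2 * p - 1) (hkodd : Odd k) :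
    ∀ j : ℕ, j ≤ 2 →
      |(Nat.card {ξ : Fin (2 * p) → ℤ //
          (∀ i, ξ i = 1 ∨ ξ i = -1) ∧
          ξ x₁ = (if 1 ≤ j then 1 else -1) ∧
          ξ x₂ = (if j = 2 then 1 else -1) ∧
          (∑ i, ξ i) = 0 ∧
          (∑ i, ((i.val : ℤ) + 1) * ξ i) ≡ (k : ℤ) [ZMOD (2 * p : ℤ)]} : ℝ)
        - ((2 * p - 2).choose (p - j) : ℝ) / p| ≤ p := by
  intro j hj
  classical
  have hp2 := hp.two_le
  have hpne2 : p ≠ 2 := by rintro rfl; revert hodd; decide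
  have hp3 : 3 ≤ p := by
    rcases Nat.lt_or_ge p 3 with h | h
    · interval_cases p <;> omega
    · exact h
  have hp0 : p ≠ 0 := by omega
  obtain ⟨a, ha⟩ := hkodd
  obtain ⟨b, hb⟩ := hodd
  have hodd' : Odd p := ⟨b, hb⟩
  set m : ℤ := (a : ℤ) + b + 1 with hm'
  have hm : (k : ℤ) + p = 2 * m := by rw [hm', ha, hb]; push_cast; ring
  set F : Finset (Fin (2 * p)) := (if 1 ≤ j then {x₁} else ∅) ∪ (if j = 2 then {x₂} else ∅)
    with hF
  have hFsub : F ⊆ {x₁, x₂} := by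
    rw [hF]; intro i hi
    rcases mem_union.mp hi with h | h
    · split at h
      · simp only [mem_singleton] at h; simp [h]
      · simp at h
    · split at h
      · simp only [mem_singleton] at h; simp [h]
      · simp at h
  have hx₁F : x₁ ∈ F ↔ 1 ≤ j := by
    rw [hF]; interval_cases j <;> simp [hx]
  have hx₂F : x₂ ∈ F ↔ j = 2 := by
    rw [hF]; interval_cases j <;> simp [hx, hx.symm]
  have hFcard : #F = j := by
    rw [hF]
    interval_cases j
    · simp
    · simp
    · rw [if_pos (by norm_num), if_pos rfl]
      rw [show ({x₁} ∪ {x₂} : Finset (Fin (2 * p))) = {x₁, x₂} from by ext i; simp]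
      rw [Finset.card_insert_of_notMem (by simpa using hx), Finset.card_singleton]
  rw [count_eq hp3 hx hj k m hm F hFsub hx₁F hx₂F hFcard]
  set S : Finset (Fin (2 * p)) := univ \ {x₁, x₂} with hS
  set 𝒜 := Finset.powersetCard (p - j) S with h𝒜
  set σ : Finset (Fin (2 * p)) → ℤ := fun A => ∑ i ∈ A, ((i.val : ℤ) + 1) with hσ
  set c : ℤ := ∑ i ∈ F, ((i.val : ℤ) + 1) with hc
  set T := 𝒜.filter (fun A => σ A + c ≡ m [ZMOD (p : ℤ)]) with hT
  have hcardS : #S = 2 * p - 2 := by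
    rw [hS, card_sdiff_of_subset (subset_univ _), card_univ, Fintype.card_fin]
    have : #({x₁, x₂} : Finset (Fin (2 * p))) = 2 := by
      rw [card_insert_of_notMem (by simpa using hx), card_singleton]
    omega
  have hcard𝒜 : #𝒜 = (2 * p - 2).choose (p - j) := by
    rw [h𝒜, Finset.card_powersetCard, hcardS]
  set ω : ℂ := Complex.exp (2 * π * I / p) with hω'
  have hω : IsPrimitiveRoot ω p := Complex.isPrimitiveRoot_exp p hp0
  have hωne : ω ≠ 0 := Complex.exp_ne_zero _
  have hωnorm : ‖ω‖ = 1 := Complex.norm_eq_one_of_pow_eq_one hω.pow_eq_one hp0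
  set G : ℕ → ℂ := fun t => ∑ A ∈ 𝒜, (ω ^ (σ A + c - m)) ^ t with hG
  have hpC : ((p : ℂ)) ≠ 0 := Nat.cast_ne_zero.mpr hp0
  -- main identity
  have hTcard : (#T : ℂ) = (1 / p) * ∑ t ∈ Finset.range p, G t := by
    rw [hT, Finset.card_filter]
    push_cast
    rw [hG, Finset.sum_comm, Finset.mul_sum]
    refine Finset.sum_congr rfl fun A hA => ?_
    have hd := delta hp0 hω (σ A + c - m)
    have hcond : (σ A + c ≡ m [ZMOD (p : ℤ)]) ↔ (p : ℤ) ∣ (σ A + c - m) := by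
      rw [Int.modEq_iff_dvd, show m - (σ A + c) = -(σ A + c - m) by ring, dvd_neg]
    rw [hd]
    split_ifs with h1 h2 h2
    · rw [mul_comm, mul_one_div, div_self hpC]
    · exact absurd (hcond.mp h1) h2
    · exact absurd (hcond.mpr h2) h1
    · rw [mul_zero]
  have hG0 : G 0 = ((2 * p - 2).choose (p - j) : ℂ) := by
    rw [hG]
    simp only [pow_zero]
    rw [Finset.sum_const, hcard𝒜, nsmul_eq_mul, mul_one]
  have hGbound : ∀ t ∈ (Finset.range p).erase 0, ‖G t‖ ≤ (p : ℝ) + 1 := by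
    intro t ht
    rw [Finset.mem_erase, Finset.mem_range] at ht
    obtain ⟨ht0, htp⟩ := ht
    have hcop : Nat.Coprime t p := Nat.Coprime.symm
      ((Nat.Prime.coprime_iff_not_dvd hp).mpr (Nat.not_dvd_of_pos_of_lt (Nat.pos_of_ne_zero ht0) htp))
    have hζ : IsPrimitiveRoot (ω ^ t) p := hω.pow_of_coprime t hcop
    have hζne : (ω ^ t) ≠ 0 := pow_ne_zero _ hωne
    have hswap : ∀ d : ℤ, (ω ^ d) ^ t = (ω ^ t) ^ d := fun d => by
      rw [← zpow_natCast (ω ^ d) t, ← zpow_mul, mul_comm, zpow_mul, zpow_natCast]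
    have hA : ∀ A ∈ 𝒜, (ω ^ (σ A + c - m)) ^ t
        = (ω ^ t) ^ (c - m) * ∏ i ∈ A, (ω ^ t) ^ (i.val + 1) := by
      intro A _
      rw [hswap, show σ A + c - m = σ A + (c - m) by ring, zpow_add₀ hζne]
      have hσA : σ A = ((∑ i ∈ A, (i.val + 1) : ℕ) : ℤ) := by rw [hσ]; push_cast; ring
      rw [hσA, zpow_natCast, ← Finset.prod_pow_eq_pow_sum, mul_comm]
    show ‖∑ A ∈ 𝒜, (ω ^ (σ A + c - m)) ^ t‖ ≤ (p : ℝ) + 1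
    rw [Finset.sum_congr rfl hA, ← Finset.mul_sum]
    rw [norm_mul, norm_zpow, norm_pow, hωnorm, one_pow, one_zpow, one_mul]
    exact charSum hp3 hodd' hζ hx hj
  -- put together
  have hsplit : ∑ t ∈ Finset.range p, G t
      = G 0 + ∑ t ∈ (Finset.range p).erase 0, G t :=
    (Finset.add_sum_erase _ _ (Finset.mem_range.mpr (by omega))).symm
  set E : ℂ := ∑ t ∈ (Finset.range p).erase 0, G t with hE
  have hEbound : ‖E‖ ≤ ((p : ℝ) - 1) * ((p : ℝ) + 1) := by
    rw [hE]
    calc ‖∑ t ∈ (Finset.range p).erase 0, G t‖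
        ≤ ∑ t ∈ (Finset.range p).erase 0, ‖G t‖ := norm_sum_le _ _
      _ ≤ ∑ _t ∈ (Finset.range p).erase 0, ((p : ℝ) + 1) := Finset.sum_le_sum hGbound
      _ = ((p : ℝ) - 1) * ((p : ℝ) + 1) := by
          rw [Finset.sum_const, Finset.card_erase_of_mem (Finset.mem_range.mpr (by omega)),
            Finset.card_range, nsmul_eq_mul]
          have : ((p - 1 : ℕ) : ℝ) = (p : ℝ) - 1 := by
            push_cast [Nat.cast_sub (by omega : 1 ≤ p)]; ring
          rw [this]
  have hfinal : (#T : ℂ) - ((2 * p - 2).choose (p - j) : ℂ) / p = (1 / p) * E := by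
    rw [hTcard, hsplit, hG0, hE]
    field_simp
    ring
  -- go to the reals
  set r : ℝ := (#T : ℝ) - ((2 * p - 2).choose (p - j) : ℝ) / p with hr
  have hrC : ((r : ℝ) : ℂ) = (#T : ℂ) - ((2 * p - 2).choose (p - j) : ℂ) / p := by
    rw [hr]; push_cast; ring
  have : |r| ≤ (p : ℝ) := by
    have h1 : |r| = ‖((r : ℝ) : ℂ)‖ := by rw [Complex.norm_real, Real.norm_eq_abs]
    rw [h1, hrC, hfinal, norm_mul]
    have h2 : ‖(1 / (p : ℂ))‖ = 1 / (p : ℝ) := by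
      rw [norm_div, norm_one, Complex.norm_natCast]
    rw [h2]
    have hppos : (0 : ℝ) < p := by exact_mod_cast Nat.pos_of_ne_zero hp0
    calc 1 / (p : ℝ) * ‖E‖ ≤ 1 / (p : ℝ) * (((p : ℝ) - 1) * ((p : ℝ) + 1)) := by
          apply mul_le_mul_of_nonneg_left hEbound
          positivity
      _ ≤ (p : ℝ) := by
          rw [div_mul_eq_mul_div, one_mul, div_le_iff₀ hppos]
          nlinarith
  exact this
end

section
/- Let f : [0, T] → (0, 1] be continuous, let Z : [0, T] → [−1, 1] be measurable, and let Y : [0, T] → ℝ be differentiable with Y'(t) = −Z(t) f(t) for all t, where Z(t) ∈ σ(Y(t)) with σ(y) = {sgn(y)} for y ≠ 0 and σ(0) = [−1, 1]. Then once Y hits zero it stays at zero: if Y(t₀) = 0 for some t₀ ∈ [0, T], then Y(t) = 0 for all t ∈ [t₀, T]. Consequently Z(t) = sgn(Y(t)) for almost every t. -/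
open MeasureTheory Set Filter Topology

/-!
`Y * Y' = -(Z * Y) * f ≤ 0`, since `Z = sign Y` wherever `Y ≠ 0` and `f > 0`. Hence `Y ^ 2` is
antitone, so `Y` stays at zero once it vanishes. At a zero `t < T` the right derivative of `Y`
is then `0 = -Z t * f t`, which forces `Z t = 0 = sign (Y t)`; only `t = T` escapes this argument.
-/

lemma antitoneOn_sq_of_mul_deriv_nonpos {Y Y' : ℝ → ℝ} {s : Set ℝ} (hs : Convex ℝ s)
    (hY : ∀ t ∈ s, HasDerivAt Y (Y' t) t) (hYY' : ∀ t ∈ s, Y t * Y' t ≤ 0) :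
    AntitoneOn (fun t => Y t ^ 2) s := by
  refine antitoneOn_of_hasDerivWithinAt_nonpos (f' := fun t => 2 * Y t * Y' t) hs
    (fun t ht => ((hY t ht).continuousAt.pow 2).continuousWithinAt)
    (fun t ht => ?_) (fun t ht => ?_)
  · have h := (hY t (interior_subset ht)).pow 2
    simp only [Nat.cast_ofNat] at h
    exact (h.congr_deriv (by ring)).hasDerivWithinAt
  · nlinarith [hYY' t (interior_subset ht)]

lemma eq_zero_of_sq_antitoneOn {Y : ℝ → ℝ} {s : Set ℝ}
    (hY : AntitoneOn (fun t => Y t ^ 2) s) {t₀ t : ℝ} (ht₀ : t₀ ∈ s) (ht : t ∈ s)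
    (hle : t₀ ≤ t) (hY₀ : Y t₀ = 0) : Y t = 0 := by
  have h : Y t ^ 2 ≤ Y t₀ ^ 2 := hY ht₀ ht hle
  rw [hY₀] at h
  exact pow_eq_zero_iff two_ne_zero |>.mp (le_antisymm (by simpa using h) (sq_nonneg _))

lemma HasDerivAt.eq_zero_of_eventuallyEq_const_nhdsGE {Y : ℝ → ℝ} {y' t c : ℝ}
    (hY : HasDerivAt Y y' t) (hc : Y =ᶠ[𝓝[≥] t] fun _ => c) : y' = 0 :=
  (uniqueDiffWithinAt_Ici t).eq_deriv _ hY.hasDerivWithinAt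
    ((hasDerivWithinAt_const t _ c).congr_of_eventuallyEq hc (hc.eq_of_nhdsWithin self_mem_Ici))

theorem stmt11_general (T : ℝ) (f Z Y : ℝ → ℝ)
    (hf' : ∀ t ∈ Set.Icc 0 T, f t ∈ Set.Ioc (0 : ℝ) 1)
    (hZY : ∀ t ∈ Set.Icc 0 T, Y t ≠ 0 → Z t = Real.sign (Y t))
    (hY : ∀ t ∈ Set.Icc 0 T, HasDerivAt Y (-(Z t) * f t) t) :
    (∀ t₀ ∈ Set.Icc 0 T, Y t₀ = 0 → ∀ t ∈ Set.Icc t₀ T, Y t = 0) ∧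
    (∀ᵐ t ∂(volume.restrict (Set.Icc 0 T)), Z t = Real.sign (Y t)) := by
  have hdissip : ∀ t ∈ Icc 0 T, Y t * (-(Z t) * f t) ≤ 0 := fun t ht => by
    by_cases h0 : Y t = 0
    · simp [h0]
    · rw [hZY t ht h0]
      nlinarith [Real.sign_mul_nonneg (Y t), (hf' t ht).1]
  have hsq := antitoneOn_sq_of_mul_deriv_nonpos (convex_Icc 0 T) hY hdissip
  have hstay : ∀ t₀ ∈ Icc 0 T, Y t₀ = 0 → ∀ t ∈ Icc t₀ T, Y t = 0 := fun t₀ ht₀ h0 t ht =>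
    eq_zero_of_sq_antitoneOn hsq ht₀ ⟨ht₀.1.trans ht.1, ht.2⟩ ht.1 h0
  refine ⟨hstay, ?_⟩
  rw [Measure.restrict_congr_set Ico_ae_eq_Icc.symm]
  refine ae_restrict_of_forall_mem measurableSet_Ico fun t ht => ?_
  have htI : t ∈ Icc 0 T := Ico_subset_Icc_self ht
  by_cases h0 : Y t = 0
  · have hconst : Y =ᶠ[𝓝[≥] t] fun _ => 0 :=
      eventually_of_mem (Icc_mem_nhdsGE ht.2) fun u hu => hstay t htI h0 u hu
    have hderiv := (hY t htI).eq_zero_of_eventuallyEq_const_nhdsGE hconst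
    have hZ0 : Z t = 0 := by
      simpa [(hf' t htI).1.ne'] using hderiv
    rw [hZ0, h0, Real.sign_zero]
  · exact hZY t htI h0

/-- If `Y' = −Z f` on `[0,T]` with `f` continuous taking values in `(0,1]`,
`Z` taking values in `[−1,1]` and `Z t = sgn (Y t)` whenever `Y t ≠ 0` (Filippov selection),
then once `Y` hits zero it stays at zero, and `Z t = sgn (Y t)` for a.e. `t ∈ [0,T]`. -/
theorem stmt11 (T : ℝ) (hT : 0 < T) (f Z Y : ℝ → ℝ)
    (hf : ContinuousOn f (Set.Icc 0 T))
    (hf' : ∀ t ∈ Set.Icc 0 T, f t ∈ Set.Ioc (0 : ℝ) 1)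
    (hZ : ∀ t ∈ Set.Icc 0 T, Z t ∈ Set.Icc (-1 : ℝ) 1)
    (hZY : ∀ t ∈ Set.Icc 0 T, Y t ≠ 0 → Z t = Real.sign (Y t))
    (hY : ∀ t ∈ Set.Icc 0 T, HasDerivAt Y (-(Z t) * f t) t) :
    (∀ t₀ ∈ Set.Icc 0 T, Y t₀ = 0 → ∀ t ∈ Set.Icc t₀ T, Y t = 0) ∧
    (∀ᵐ t ∂(volume.restrict (Set.Icc 0 T)), Z t = Real.sign (Y t)) :=
  stmt11_general T f Z Y hf' hZY hY
end
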